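/- arXiv:0908.0383 — 16 statements merged into one kernel-verified Lean document; each statement's English description precedes it below -/
import Mathlib

section
/- Let B be a real vector space with a symmetric bilinear form ⌊·,·⌋, and set q(b) := (1/2)⌊b,b⌋. Let f : B → ℝ ∪ {∞} be a proper convex function with f ≥ q on B. Then for all b, c ∈ B, −q(b − c) ≤ (√((f−q)(b)) + √((f−q)(c)))², whenever (f−q)(b) and (f−q)(c) are finite. -/
/-! Along the segment from `c` to `b`, `q` is a quadratic with
`q (t • b + (1 - t) • c) = t q b + (1 - t) q c - t (1 - t) q (b - c)`, while `f` lies above `q` and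
below its chord. Hence `-t (1 - t) q (b - c) ≤ t (f - q) b + (1 - t) (f - q) c` for `t ∈ [0, 1]`,
and the best choice of `t` gives the bound. -/

open Set Filter Topology

theorem LinearMap.BilinForm.apply_smul_add_one_sub_smul_self {R M : Type*} [CommRing R]
    [AddCommGroup M] [Module R M] (β : LinearMap.BilinForm R M) (t : R) (x y : M) :
    β (t • x + (1 - t) • y) (t • x + (1 - t) • y) =
      t * β x x + (1 - t) * β y y - t * (1 - t) * β (x - y) (x - y) := by
  simp only [map_add, map_sub, map_smul, LinearMap.add_apply, LinearMap.sub_apply,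
    LinearMap.smul_apply, smul_eq_mul]
  ring

theorem le_sq_sqrt_add_sqrt_of_pos {K α β : ℝ} (hα : 0 < α) (hβ : 0 < β)
    (h : ∀ t ∈ Icc (0 : ℝ) 1, K * (t * (1 - t)) ≤ t * α + (1 - t) * β) :
    K ≤ (√α + √β) ^ 2 := by
  set a := √α
  set b := √β
  have ha : 0 < a := Real.sqrt_pos.2 hα
  have hb : 0 < b := Real.sqrt_pos.2 hβ
  have hab : 0 < a + b := by positivity
  -- `t = b / (a + b)` minimises `α / (1 - t) + β / t` over `(0, 1)`.
  have key := h (b / (a + b)) ⟨by positivity, (div_le_one hab).2 (by linarith)⟩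
  have hαa : α = a ^ 2 := (Real.sq_sqrt hα.le).symm
  have hβb : β = b ^ 2 := (Real.sq_sqrt hβ.le).symm
  have hlhs : b / (a + b) * (1 - b / (a + b)) = a * b / (a + b) ^ 2 := by
    field_simp; ring
  have hrhs : b / (a + b) * α + (1 - b / (a + b)) * β = a * b := by
    rw [hαa, hβb]; field_simp; ring
  rw [hlhs, hrhs, ← mul_div_assoc, div_le_iff₀ (by positivity), mul_comm K] at key
  exact le_of_mul_le_mul_left key (by positivity)

theorem le_sq_sqrt_add_sqrt {K α β : ℝ} (hα : 0 ≤ α) (hβ : 0 ≤ β)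
    (h : ∀ t ∈ Icc (0 : ℝ) 1, K * (t * (1 - t)) ≤ t * α + (1 - t) * β) :
    K ≤ (√α + √β) ^ 2 := by
  have hcont : Continuous fun ε : ℝ => (√(α + ε) + √(β + ε)) ^ 2 := by fun_prop
  have hlim := (hcont.tendsto 0).mono_left (nhdsWithin_le_nhds (s := Ioi 0))
  simp only [add_zero] at hlim
  refine ge_of_tendsto hlim (eventually_nhdsWithin_of_forall fun ε (hε : 0 < ε) => ?_)
  refine le_sq_sqrt_add_sqrt_of_pos (by linarith) (by linarith) fun t ht => ?_
  linarith [h t ht, ht.1, ht.2]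

theorem stmt_0_general (B : Type*) [AddCommGroup B] [Module ℝ B]
    (br : B →ₗ[ℝ] B →ₗ[ℝ] ℝ)
    (q : B → ℝ) (hq : ∀ b, q b = br b b / 2)
    (f : B → EReal)
    (hconv : ∀ x y : B, ∀ t : ℝ, 0 ≤ t → t ≤ 1 →
      f (t • x + (1 - t) • y) ≤ (t : EReal) * f x + ((1 - t : ℝ) : EReal) * f y)
    (hfq : ∀ b, (q b : EReal) ≤ f b)
    (b c : B) (rb rc : ℝ) (hfb : f b = (rb : EReal)) (hfc : f c = (rc : EReal)) :
    -q (b - c) ≤ (Real.sqrt (rb - q b) + Real.sqrt (rc - q c)) ^ 2 := by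
  have hqb : q b ≤ rb := EReal.coe_le_coe_iff.1 (hfb ▸ hfq b)
  have hqc : q c ≤ rc := EReal.coe_le_coe_iff.1 (hfc ▸ hfq c)
  refine le_sq_sqrt_add_sqrt (sub_nonneg.2 hqb) (sub_nonneg.2 hqc) fun t ⟨ht0, ht1⟩ => ?_
  have hseg : q (t • b + (1 - t) • c) ≤ t * rb + (1 - t) * rc := by
    have := (hfq _).trans (hconv b c t ht0 ht1)
    rw [hfb, hfc] at this
    exact_mod_cast this
  rw [hq, LinearMap.BilinForm.apply_smul_add_one_sub_smul_self] at hseg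
  rw [hq, hq, hq]
  linarith

theorem stmt_0 (B : Type*) [AddCommGroup B] [Module ℝ B] (hB : ∃ b : B, b ≠ 0)
    (br : B →ₗ[ℝ] B →ₗ[ℝ] ℝ) (hsym : ∀ b c, br b c = br c b)
    (q : B → ℝ) (hq : ∀ b, q b = br b b / 2)
    (f : B → EReal) (hproper : ∃ b, f b ≠ ⊤) (hreal : ∀ b, f b ≠ ⊥)
    (hconv : ∀ x y : B, ∀ t : ℝ, 0 ≤ t → t ≤ 1 →
      f (t • x + (1 - t) • y) ≤ (t : EReal) * f x + ((1 - t : ℝ) : EReal) * f y)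
    (hfq : ∀ b, (q b : EReal) ≤ f b)
    (b c : B) (rb rc : ℝ) (hfb : f b = (rb : EReal)) (hfc : f c = (rc : EReal)) :
    -q (b - c) ≤ (Real.sqrt (rb - q b) + Real.sqrt (rc - q c)) ^ 2 :=
  stmt_0_general B br q hq f hconv hfq b c rb rc hfb hfc
end

section
/- Let (B, ⌊·,·⌋) be an SSD space, f a proper convex function on B with f ≥ q on B, and suppose P_q(f) := {b ∈ B : f(b) = q(b)} is nonempty. Then P_q(f) is q-positive, i.e., for all b, c ∈ P_q(f), q(b − c) ≥ 0. -/
theorem stmt_2 (B : Type*) [AddCommGroup B] [Module ℝ B] (hB : ∃ b : B, b ≠ 0)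
    (br : B →ₗ[ℝ] B →ₗ[ℝ] ℝ) (hsym : ∀ b c, br b c = br c b)
    (q : B → ℝ) (hq : ∀ b, q b = br b b / 2)
    (f : B → EReal) (hproper : ∃ b, f b ≠ ⊤) (hreal : ∀ b, f b ≠ ⊥)
    (hconv : ∀ x y : B, ∀ t : ℝ, 0 ≤ t → t ≤ 1 →
      f (t • x + (1 - t) • y) ≤ (t : EReal) * f x + ((1 - t : ℝ) : EReal) * f y)
    (hfq : ∀ b, (q b : EReal) ≤ f b)
    (hne : {b : B | f b = (q b : EReal)}.Nonempty) :
    ∀ b ∈ {b : B | f b = (q b : EReal)}, ∀ c ∈ {b : B | f b = (q b : EReal)},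
      0 ≤ q (b - c) := by
  intro b hb c hc
  simp only [Set.mem_setOf_eq] at hb hc
  have hm := hconv b c (1/2) (by norm_num) (by norm_num)
  rw [hb, hc] at hm
  have h1 := hfq ((1/2 : ℝ) • b + (1 - 1/2 : ℝ) • c)
  have h2 : (q ((1/2 : ℝ) • b + (1 - 1/2 : ℝ) • c) : EReal)
      ≤ (((q b + q c) / 2 : ℝ) : EReal) := by
    refine le_trans (le_trans h1 hm) ?_
    rw [← EReal.coe_mul, ← EReal.coe_mul, ← EReal.coe_add]
    exact le_of_eq (by norm_cast; ring)
  rw [EReal.coe_le_coe_iff] at h2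
  have hexp : q ((1/2 : ℝ) • b + (1 - 1/2 : ℝ) • c)
      = (br b b + 2 * br b c + br c c) / 8 := by
    simp only [hq, map_add, map_smul, LinearMap.add_apply, LinearMap.smul_apply,
      smul_eq_mul, hsym c b]
    ring
  have hexp2 : q (b - c) = (br b b - 2 * br b c + br c c) / 2 := by
    simp only [hq, map_sub, LinearMap.sub_apply, hsym c b]
    ring
  rw [hexp] at h2
  rw [hexp2]
  simp only [hq] at h2
  linarith
end

section
/- Let (B, ⌊·,·⌋) be an SSD space and A a nonempty q-positive subset of B. Define Φ_A(b) := sup_{a∈A} (⌊a,b⌋ − q(a)) and the intrinsic conjugate f^@(c) := sup_{b∈B} (⌊b,c⌋ − f(b)). Then Φ_A^@ ≤ q on A. -/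
theorem stmt_3 (B : Type*) [AddCommGroup B] [Module ℝ B] (hB : ∃ b : B, b ≠ 0)
    (br : B →ₗ[ℝ] B →ₗ[ℝ] ℝ) (hsym : ∀ b c, br b c = br c b)
    (q : B → ℝ) (hq : ∀ b, q b = br b b / 2)
    (A : Set B) (hA : A.Nonempty) (hApos : ∀ b ∈ A, ∀ c ∈ A, 0 ≤ q (b - c))
    (Phi : B → EReal) (hPhi : ∀ b, Phi b = ⨆ a : A, ((br a.1 b - q a.1 : ℝ) : EReal))
    (PhiConj : B → EReal)
    (hPhiConj : ∀ c, PhiConj c = ⨆ b : B, ((br b c : ℝ) : EReal) - Phi b) :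
    ∀ a ∈ A, PhiConj a ≤ (q a : EReal) := by
  intro a ha
  rw [hPhiConj]
  refine iSup_le fun b => ?_
  have hPb : ((br a b - q a : ℝ) : EReal) ≤ Phi b := by
    rw [hPhi]
    exact le_iSup (fun x : A => ((br x.1 b - q x.1 : ℝ) : EReal)) ⟨a, ha⟩
  calc ((br b a : ℝ) : EReal) - Phi b
      ≤ ((br b a : ℝ) : EReal) - ((br a b - q a : ℝ) : EReal) :=
        EReal.sub_le_sub le_rfl hPb
    _ = ((br b a - (br a b - q a) : ℝ) : EReal) := by
        norm_cast
    _ = (q a : EReal) := by rw [hsym b a]; ring_nf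
end

section
/- Let (B, ⌊·,·⌋) be an SSD space and A a nonempty q-positive subset of B. Then Φ_A^@ ≥ Φ_A ∨ q on B, i.e., for every c ∈ B, Φ_A^@(c) ≥ Φ_A(c) and Φ_A^@(c) ≥ q(c). -/
theorem stmt_4 (B : Type*) [AddCommGroup B] [Module ℝ B] (hB : ∃ b : B, b ≠ 0)
    (br : B →ₗ[ℝ] B →ₗ[ℝ] ℝ) (hsym : ∀ b c, br b c = br c b)
    (q : B → ℝ) (hq : ∀ b, q b = br b b / 2)
    (A : Set B) (hA : A.Nonempty) (hApos : ∀ b ∈ A, ∀ c ∈ A, 0 ≤ q (b - c))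
    (Phi : B → EReal) (hPhi : ∀ b, Phi b = ⨆ a : A, ((br a.1 b - q a.1 : ℝ) : EReal))
    (PhiConj : B → EReal)
    (hPhiConj : ∀ c, PhiConj c = ⨆ b : B, ((br b c : ℝ) : EReal) - Phi b) :
    ∀ c : B, Phi c ≤ PhiConj c ∧ (q c : EReal) ≤ PhiConj c := by
  have key : ∀ a ∈ A, Phi a ≤ ((q a : ℝ) : EReal) := by
    intro a ha
    rw [hPhi]
    apply iSup_le
    rintro ⟨a', ha'⟩
    rw [EReal.coe_le_coe_iff]
    have h0 := hApos a' ha' a ha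
    have hq1 := hq (a' - a)
    have hq2 := hq a'
    have hq3 := hq a
    have hsym1 := hsym a' a
    simp only [map_sub, LinearMap.sub_apply] at hq1
    nlinarith
  intro c
  have part1 : Phi c ≤ PhiConj c := by
    rw [hPhi, hPhiConj]
    apply iSup_le
    rintro ⟨a, ha⟩
    refine le_trans ?_ (le_iSup _ a)
    have heq : ((br a c - q a : ℝ) : EReal)
        = ((br a c : ℝ) : EReal) - ((q a : ℝ) : EReal) := by
      exact_mod_cast rfl
    rw [heq]
    exact EReal.sub_le_sub le_rfl (key a ha)
  refine ⟨part1, ?_⟩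
  rcases le_or_gt (Phi c) ((q c : ℝ) : EReal) with h | h
  · rw [hPhiConj]
    refine le_trans ?_ (le_iSup _ c)
    have hbr : (q c : ℝ) = br c c - q c := by rw [hq]; ring
    calc ((q c : ℝ) : EReal) = ((br c c - q c : ℝ) : EReal) := by rw [← hbr]
      _ = ((br c c : ℝ) : EReal) - ((q c : ℝ) : EReal) := by exact_mod_cast rfl
      _ ≤ ((br c c : ℝ) : EReal) - Phi c := EReal.sub_le_sub le_rfl h
  · exact le_trans h.le part1
end

section
/- Let (B, ⌊·,·⌋) be an SSD space and A a nonempty q-positive subset of B. Then Φ_A^{@@} = Φ_A on B, where ^@ denotes the conjugate with respect to the pairing ⌊·,·⌋. -/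
theorem stmt_5 (B : Type*) [AddCommGroup B] [Module ℝ B] (hB : ∃ b : B, b ≠ 0)
    (br : B →ₗ[ℝ] B →ₗ[ℝ] ℝ) (hsym : ∀ b c, br b c = br c b)
    (q : B → ℝ) (hq : ∀ b, q b = br b b / 2)
    (A : Set B) (hA : A.Nonempty) (hApos : ∀ b ∈ A, ∀ c ∈ A, 0 ≤ q (b - c))
    (Phi : B → EReal) (hPhi : ∀ b, Phi b = ⨆ a : A, ((br a.1 b - q a.1 : ℝ) : EReal))
    (PhiConj : B → EReal)
    (hPhiConj : ∀ c, PhiConj c = ⨆ b : B, ((br b c : ℝ) : EReal) - Phi b)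
    (PhiConj2 : B → EReal)
    (hPhiConj2 : ∀ c, PhiConj2 c = ⨆ b : B, ((br b c : ℝ) : EReal) - PhiConj b) :
    ∀ b : B, PhiConj2 b = Phi b := by
  -- Phi b is never ⊥
  have hPhibot : ∀ b : B, ((br hA.choose b - q hA.choose : ℝ) : EReal) ≤ Phi b := by
    intro b
    rw [hPhi]
    exact le_iSup (fun a : A => ((br a.1 b - q a.1 : ℝ) : EReal)) ⟨hA.choose, hA.choose_spec⟩
  -- key: PhiConj a ≤ q a for a ∈ A
  have hkey : ∀ a ∈ A, PhiConj a ≤ ((q a : ℝ) : EReal) := by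
    intro a ha
    rw [hPhiConj]
    refine iSup_le fun b => ?_
    have h1 : ((br a b - q a : ℝ) : EReal) ≤ Phi b := by
      rw [hPhi]
      exact le_iSup (fun a' : A => ((br a'.1 b - q a'.1 : ℝ) : EReal)) ⟨a, ha⟩
    calc ((br b a : ℝ) : EReal) - Phi b
        ≤ ((br b a : ℝ) : EReal) - ((br a b - q a : ℝ) : EReal) :=
          EReal.sub_le_sub le_rfl h1
      _ = ((q a : ℝ) : EReal) := by
          rw [← EReal.coe_sub]; norm_cast; rw [hsym a b]; ring
  intro b
  apply le_antisymm
  · -- PhiConj2 b ≤ Phi b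
    rw [hPhiConj2]
    refine iSup_le fun c => ?_
    rcases eq_or_ne (Phi b) ⊤ with htop | htop
    · rw [htop]; exact le_top
    have hbot : Phi b ≠ ⊥ := fun h => by
      have := hPhibot b; rw [h] at this; exact (EReal.coe_ne_bot _) (le_bot_iff.mp this)
    have h1 : ((br b c : ℝ) : EReal) - Phi b ≤ PhiConj c := by
      rw [hPhiConj]
      exact le_iSup (fun b' : B => ((br b' c : ℝ) : EReal) - Phi b') b
    have hcbot : PhiConj c ≠ ⊥ := by
      intro h
      rw [h, le_bot_iff] at h1
      rw [sub_eq_add_neg, EReal.add_eq_bot_iff] at h1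
      rcases h1 with hh | hh
      · exact EReal.coe_ne_bot _ hh
      · exact htop (EReal.neg_eq_bot_iff.mp hh)
    have h2 : ((br c b : ℝ) : EReal) ≤ PhiConj c + Phi b := by
      rw [hsym c b]
      exact (EReal.sub_le_iff_le_add (.inl hbot) (.inr hcbot)).mp h1
    exact EReal.sub_le_of_le_add' h2
  · -- Phi b ≤ PhiConj2 b
    rw [hPhi]
    refine iSup_le fun a => ?_
    rw [hPhiConj2]
    refine le_iSup_of_le a.1 ?_
    calc ((br a.1 b - q a.1 : ℝ) : EReal)
        = ((br a.1 b : ℝ) : EReal) - ((q a.1 : ℝ) : EReal) := by rw [← EReal.coe_sub]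
      _ ≤ ((br a.1 b : ℝ) : EReal) - PhiConj a.1 :=
          EReal.sub_le_sub le_rfl (hkey a.1 a.2)
end

section
/- Let (B, ⌊·,·⌋) be an SSD space, f a proper convex function on B with f ≥ q on B, a ∈ P_q(f) (i.e., f(a) = q(a)), and b ∈ B. Then ⌊b,a⌋ ≤ q(a) + f(b). -/
open Filter Topology

/-!
On the segment `c t = t • b + (1 - t) • a`, `q ≤ f` and convexity give
`q (c t) ≤ t f(b) + (1 - t) q(a)`. Expanding the quadratic form, this says
`t (⌊b,a⌋ - q a - f b) ≤ O(t²)`; dividing by `t` and letting `t → 0⁺` gives the claim.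
-/

lemma le_of_forall_le_add_mul {x y c : ℝ} (h : ∀ t : ℝ, 0 < t → t ≤ 1 → x ≤ y + t * c) :
    x ≤ y := by
  have hlim : Tendsto (fun t : ℝ => y + t * c) (𝓝[>] 0) (𝓝 y) := by
    have : Continuous fun t : ℝ => y + t * c := by fun_prop
    simpa using this.continuousWithinAt.tendsto (x := 0) (s := Set.Ioi 0)
  refine ge_of_tendsto hlim ?_
  filter_upwards [Ioc_mem_nhdsGT one_pos] with t ht using h t ht.1 ht.2

lemma LinearMap.apply_smul_add_smul_self {B : Type*} [AddCommGroup B] [Module ℝ B]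
    (br : B →ₗ[ℝ] B →ₗ[ℝ] ℝ) (hsym : ∀ b c, br b c = br c b) (a b : B) (t : ℝ) :
    br (t • b + (1 - t) • a) (t • b + (1 - t) • a)
      = t ^ 2 * br b b + 2 * t * (1 - t) * br b a + (1 - t) ^ 2 * br a a := by
  simp only [map_add, map_smul, LinearMap.add_apply, LinearMap.smul_apply, smul_eq_mul, hsym a b]
  ring

lemma LinearMap.apply_le_of_forall_segment {B : Type*} [AddCommGroup B] [Module ℝ B]
    (br : B →ₗ[ℝ] B →ₗ[ℝ] ℝ) (hsym : ∀ b c, br b c = br c b) (a b : B) (F : ℝ)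
    (h : ∀ t : ℝ, 0 < t → t ≤ 1 →
      br (t • b + (1 - t) • a) (t • b + (1 - t) • a) / 2 ≤ t * F + (1 - t) * (br a a / 2)) :
    br b a ≤ br a a / 2 + F := by
  refine le_of_forall_le_add_mul (c := br b a - br a a / 2 - br b b / 2) fun t ht ht1 => ?_
  have hseg := h t ht ht1
  rw [br.apply_smul_add_smul_self hsym] at hseg
  -- after cancelling `br a a`, the inequality along the segment is `t` times the claimed one
  have : t * (br b a) ≤ t * (br a a / 2 + F + t * (br b a - br a a / 2 - br b b / 2)) := by
    nlinarith
  exact le_of_mul_le_mul_left this ht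

theorem stmt_6_general (B : Type*) [AddCommGroup B] [Module ℝ B]
    (br : B →ₗ[ℝ] B →ₗ[ℝ] ℝ) (hsym : ∀ b c, br b c = br c b)
    (q : B → ℝ) (hq : ∀ b, q b = br b b / 2)
    (f : B → EReal)
    (hconv : ∀ x y : B, ∀ t : ℝ, 0 ≤ t → t ≤ 1 →
      f (t • x + (1 - t) • y) ≤ (t : EReal) * f x + ((1 - t : ℝ) : EReal) * f y)
    (hfq : ∀ b, (q b : EReal) ≤ f b)
    (a : B) (ha : f a = (q a : EReal)) (b : B) :
    ((br b a : ℝ) : EReal) ≤ (q a : EReal) + f b := by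
  by_cases htop : f b = ⊤
  · rw [htop, EReal.add_top_of_ne_bot (EReal.coe_ne_bot _)]
    exact le_top
  have hbot : f b ≠ ⊥ := ne_bot_of_le_ne_bot (EReal.coe_ne_bot _) (hfq b)
  set F := (f b).toReal
  have hF : f b = F := (EReal.coe_toReal htop hbot).symm
  have hseg : ∀ t : ℝ, 0 < t → t ≤ 1 →
      q (t • b + (1 - t) • a) ≤ t * F + (1 - t) * q a := by
    intro t ht ht1
    have := (hfq _).trans (hconv b a t ht.le ht1)
    rw [hF, ha] at this
    exact_mod_cast this
  have := br.apply_le_of_forall_segment hsym a b F (by simpa only [hq] using hseg)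
  rw [hF, hq]
  exact_mod_cast this

theorem stmt_6 (B : Type*) [AddCommGroup B] [Module ℝ B] (hB : ∃ b : B, b ≠ 0)
    (br : B →ₗ[ℝ] B →ₗ[ℝ] ℝ) (hsym : ∀ b c, br b c = br c b)
    (q : B → ℝ) (hq : ∀ b, q b = br b b / 2)
    (f : B → EReal) (hproper : ∃ b, f b ≠ ⊤) (hreal : ∀ b, f b ≠ ⊥)
    (hconv : ∀ x y : B, ∀ t : ℝ, 0 ≤ t → t ≤ 1 →
      f (t • x + (1 - t) • y) ≤ (t : EReal) * f x + ((1 - t : ℝ) : EReal) * f y)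
    (hfq : ∀ b, (q b : EReal) ≤ f b)
    (a : B) (ha : f a = (q a : EReal)) (b : B) :
    ((br b a : ℝ) : EReal) ≤ (q a : EReal) + f b :=
  stmt_6_general B br hsym q hq f hconv hfq a ha b
end

section
/- Let (B, ⌊·,·⌋) be an SSD space and f a proper convex function on B with f ≥ q on B. Then f^@ = q on P_q(f), i.e., for every a with f(a) = q(a) one has sup_{b∈B}(⌊b,a⌋ − f(b)) = q(a). -/
theorem stmt_7 (B : Type*) [AddCommGroup B] [Module ℝ B] (hB : ∃ b : B, b ≠ 0)
    (br : B →ₗ[ℝ] B →ₗ[ℝ] ℝ) (hsym : ∀ b c, br b c = br c b)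
    (q : B → ℝ) (hq : ∀ b, q b = br b b / 2)
    (f : B → EReal) (hproper : ∃ b, f b ≠ ⊤) (hreal : ∀ b, f b ≠ ⊥)
    (hconv : ∀ x y : B, ∀ t : ℝ, 0 ≤ t → t ≤ 1 →
      f (t • x + (1 - t) • y) ≤ (t : EReal) * f x + ((1 - t : ℝ) : EReal) * f y)
    (hfq : ∀ b, (q b : EReal) ≤ f b)
    (a : B) (ha : f a = (q a : EReal)) :
    (⨆ b : B, ((br b a : ℝ) : EReal) - f b) = (q a : EReal) := by
  apply le_antisymm
  · apply iSup_le
    intro b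
    rcases eq_top_or_lt_top (f b) with htop | htop
    · simp [htop]
    · obtain ⟨r, hfb⟩ : ∃ r : ℝ, f b = (r : EReal) :=
        ⟨(f b).toReal, (EReal.coe_toReal htop.ne (hreal b)).symm⟩
      rw [hfb]
      rw [← EReal.coe_sub, EReal.coe_le_coe_iff, sub_le_comm]
      -- key real inequality: for all t ∈ (0,1], r ≥ t*q b + (1-t)*br b a - (1-t)*q a
      have key : ∀ t : ℝ, 0 < t → t ≤ 1 →
          t * q b + (1 - t) * (br b a) - (1 - t) * q a ≤ r := by
        intro t ht ht1
        have h1 := hconv b a t ht.le ht1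
        rw [hfb, ha, ← EReal.coe_mul, ← EReal.coe_mul, ← EReal.coe_add] at h1
        have h2 := (hfq (t • b + (1 - t) • a)).trans h1
        rw [EReal.coe_le_coe_iff] at h2
        have hqc : q (t • b + (1 - t) • a) =
            t^2 * q b + t * (1 - t) * (br b a) + (1 - t)^2 * q a := by
          rw [hq, hq, hq]
          simp only [map_add, map_smul, LinearMap.add_apply, LinearMap.smul_apply,
            smul_eq_mul]
          rw [hsym a b]
          ring
        rw [hqc] at h2
        nlinarith [sq_nonneg t, sq_nonneg (1 - t)]
      have htend : Filter.Tendsto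
          (fun t : ℝ => t * q b + (1 - t) * (br b a) - (1 - t) * q a)
          (nhdsWithin 0 (Set.Ioi 0)) (nhds (br b a - q a)) := by
        have hc : Continuous
            (fun t : ℝ => t * q b + (1 - t) * (br b a) - (1 - t) * q a) := by
          continuity
        simpa using (hc.tendsto 0).mono_left nhdsWithin_le_nhds
      refine le_of_tendsto htend ?_
      filter_upwards [Ioc_mem_nhdsGT_of_mem (by norm_num : (0:ℝ) ∈ Set.Ico 0 1)]
        with t ht
      exact key t ht.1 ht.2
  · have : (q a : EReal) = ((br a a : ℝ) : EReal) - f a := by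
      rw [ha, ← EReal.coe_sub, EReal.coe_eq_coe_iff, hq]
      ring
    rw [this]
    exact le_iSup (fun b => ((br b a : ℝ) : EReal) - f b) a
end

section
/- Let (B, ⌊·,·⌋) be an SSD space and f a proper convex function on B with f ≥ q on B and P_q(f) ≠ ∅. Then f ≥ Φ_{P_q(f)} on B, where Φ_A(b) := sup_{a∈A}(⌊a,b⌋ − q(a)). -/
theorem stmt_8 (B : Type*) [AddCommGroup B] [Module ℝ B] (hB : ∃ b : B, b ≠ 0)
    (br : B →ₗ[ℝ] B →ₗ[ℝ] ℝ) (hsym : ∀ b c, br b c = br c b)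
    (q : B → ℝ) (hq : ∀ b, q b = br b b / 2)
    (f : B → EReal) (hproper : ∃ b, f b ≠ ⊤) (hreal : ∀ b, f b ≠ ⊥)
    (hconv : ∀ x y : B, ∀ t : ℝ, 0 ≤ t → t ≤ 1 →
      f (t • x + (1 - t) • y) ≤ (t : EReal) * f x + ((1 - t : ℝ) : EReal) * f y)
    (hfq : ∀ b, (q b : EReal) ≤ f b)
    (hne : {b : B | f b = (q b : EReal)}.Nonempty) :
    ∀ b : B, (⨆ a : {x : B // f x = (q x : EReal)}, ((br a.1 b - q a.1 : ℝ) : EReal)) ≤ f b := by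
  intro b
  apply iSup_le
  rintro ⟨a, ha⟩
  simp only
  by_cases htop : f b = ⊤
  · rw [htop]; exact le_top
  obtain ⟨fb, hfb⟩ : ∃ r : ℝ, f b = (r : EReal) :=
    ⟨(f b).toReal, (EReal.coe_toReal htop (hreal b)).symm⟩
  rw [hfb, EReal.coe_le_coe_iff]
  have key : ∀ t : ℝ, 0 < t → t ≤ 1 →
      (br a b - q a) + t * (q b + q a - br a b) ≤ fb := by
    intro t ht0 ht1
    have h1 := hconv b a t ht0.le ht1
    rw [hfb, ha] at h1
    have h2 : (q (t • b + (1 - t) • a) : EReal) ≤ ((t * fb + (1 - t) * q a : ℝ) : EReal) := by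
      refine (hfq _).trans (h1.trans_eq ?_)
      rw [EReal.coe_add, EReal.coe_mul, EReal.coe_mul]
    have h3 : q (t • b + (1 - t) • a) ≤ t * fb + (1 - t) * q a := EReal.coe_le_coe_iff.mp h2
    have hqu : q (t • b + (1 - t) • a)
        = t ^ 2 * q b + t * (1 - t) * br a b + (1 - t) ^ 2 * q a := by
      simp only [hq, map_add, map_smul, LinearMap.add_apply, LinearMap.smul_apply,
        smul_eq_mul]
      rw [hsym b a]
      ring
    rw [hqu] at h3
    nlinarith [mul_pos ht0 ht0, h3]
  refine le_of_forall_pos_le_add ?_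
  intro ε hε
  set C : ℝ := q b + q a - br a b
  have hd : (0:ℝ) < |C| + 1 := by positivity
  set t : ℝ := min 1 (ε / (|C| + 1)) with htdef
  have ht0 : 0 < t := lt_min one_pos (by positivity)
  have ht1 : t ≤ 1 := min_le_left _ _
  have hk := key t ht0 ht1
  have htc : t * C ≥ -ε := by
    have h1 : t * |C| ≤ ε := by
      calc t * |C| ≤ (ε / (|C| + 1)) * |C| := by
            apply mul_le_mul_of_nonneg_right (min_le_right _ _) (abs_nonneg _)
        _ ≤ (ε / (|C| + 1)) * (|C| + 1) := by
            apply mul_le_mul_of_nonneg_left (by linarith) (by positivity)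
        _ = ε := by field_simp
    have := neg_abs_le C
    nlinarith [abs_nonneg C, ht0.le]
  linarith
end

section
/- Let (B, ⌊·,·⌋) be an SSD space and A a maximally q-positive subset of B. Then Φ_A^@ ≥ Φ_A ≥ q on B, and P_q(Φ_A^@) = P_q(Φ_A) = A. -/
theorem stmt_9 (B : Type*) [AddCommGroup B] [Module ℝ B] (hB : ∃ b : B, b ≠ 0)
    (br : B →ₗ[ℝ] B →ₗ[ℝ] ℝ) (hsym : ∀ b c, br b c = br c b)
    (q : B → ℝ) (hq : ∀ b, q b = br b b / 2)
    (A : Set B) (hA : A.Nonempty) (hApos : ∀ b ∈ A, ∀ c ∈ A, 0 ≤ q (b - c))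
    (hAmax : ∀ A' : Set B, A'.Nonempty → (∀ b ∈ A', ∀ c ∈ A', 0 ≤ q (b - c)) →
      A ⊆ A' → A' = A)
    (Phi : B → EReal) (hPhi : ∀ b, Phi b = ⨆ a : A, ((br a.1 b - q a.1 : ℝ) : EReal))
    (PhiConj : B → EReal)
    (hPhiConj : ∀ c, PhiConj c = ⨆ b : B, ((br b c : ℝ) : EReal) - Phi b) :
    (∀ b : B, (q b : EReal) ≤ Phi b ∧ Phi b ≤ PhiConj b) ∧
      {b : B | PhiConj b = (q b : EReal)} = A ∧
      {b : B | Phi b = (q b : EReal)} = A := by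
  have key : ∀ a b : B, br a b - q a = q b - q (b - a) := by
    intro a b
    have h1 := hsym a b
    simp only [hq, map_sub, LinearMap.sub_apply]
    linarith
  have qsymm : ∀ a b : B, q (a - b) = q (b - a) := by
    intro a b
    have h : a - b = -(b - a) := (neg_sub b a).symm
    rw [h, hq, hq]
    simp only [map_neg, LinearMap.neg_apply, neg_neg]
  -- Phi = q on A
  have hPhiA : ∀ b ∈ A, Phi b = (q b : EReal) := by
    intro b hb
    rw [hPhi]
    apply le_antisymm
    · apply iSup_le
      rintro ⟨a, ha⟩
      rw [EReal.coe_le_coe_iff]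
      have h0 := hApos b hb a ha
      have h1 := key a b
      linarith
    · have h1 : br b b - q b = q b := by rw [hq]; ring
      have h2 := le_iSup (fun a : A => ((br a.1 b - q a.1 : ℝ) : EReal)) ⟨b, hb⟩
      simpa [h1] using h2
  -- b ∉ A gives a witness with q (b - a) < 0
  have hnot : ∀ b ∉ A, ∃ a ∈ A, q (b - a) < 0 := by
    intro b hb
    by_contra h
    push_neg at h
    apply hb
    have hpos : ∀ x ∈ insert b A, ∀ y ∈ insert b A, 0 ≤ q (x - y) := by
      intro x hx y hy
      rcases hx with rfl | hx <;> rcases hy with rfl | hy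
      · simp [hq]
      · exact h y hy
      · rw [qsymm]; exact h x hx
      · exact hApos x hx y hy
    have heq := hAmax (insert b A) ⟨b, Set.mem_insert _ _⟩ hpos (Set.subset_insert _ _)
    rw [← heq]
    exact Set.mem_insert _ _
  have hqlt : ∀ b ∉ A, (q b : EReal) < Phi b := by
    intro b hb
    obtain ⟨a, ha, hlt⟩ := hnot b hb
    rw [hPhi]
    calc (q b : EReal) < ((br a b - q a : ℝ) : EReal) := by
          rw [EReal.coe_lt_coe_iff, key]; linarith
      _ ≤ ⨆ a : A, ((br a.1 b - q a.1 : ℝ) : EReal) :=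
          le_iSup (fun a : A => ((br a.1 b - q a.1 : ℝ) : EReal)) ⟨a, ha⟩
  have hqle : ∀ b, (q b : EReal) ≤ Phi b := by
    intro b
    by_cases hb : b ∈ A
    · exact (hPhiA b hb).ge
    · exact (hqlt b hb).le
  have hPhiConjge : ∀ b, Phi b ≤ PhiConj b := by
    intro b
    rw [hPhi, hPhiConj]
    apply iSup_le
    rintro ⟨a, ha⟩
    have h1 : ((br a b - q a : ℝ) : EReal) = ((br a b : ℝ) : EReal) - Phi a := by
      rw [hPhiA a ha, ← EReal.coe_sub]
    rw [h1]
    exact le_iSup (fun c : B => ((br c b : ℝ) : EReal) - Phi c) a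
  have hPhiConjA : ∀ b ∈ A, PhiConj b = (q b : EReal) := by
    intro b hb
    apply le_antisymm
    · rw [hPhiConj]
      apply iSup_le
      intro c
      have h1 : ((br b c - q b : ℝ) : EReal) ≤ Phi c := by
        rw [hPhi]
        exact le_iSup (fun a : A => ((br a.1 c - q a.1 : ℝ) : EReal)) ⟨b, hb⟩
      calc ((br c b : ℝ) : EReal) - Phi c
          ≤ ((br c b : ℝ) : EReal) - ((br b c - q b : ℝ) : EReal) :=
            EReal.sub_le_sub le_rfl h1
        _ = ((q b : ℝ) : EReal) := by
            rw [← EReal.coe_sub, EReal.coe_eq_coe_iff, hsym c b]; ring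
    · exact le_trans (hqle b) (hPhiConjge b)
  refine ⟨fun b => ⟨hqle b, hPhiConjge b⟩, ?_, ?_⟩
  · ext b
    simp only [Set.mem_setOf_eq]
    constructor
    · intro h
      by_contra hb
      exact absurd h (ne_of_gt (lt_of_lt_of_le (hqlt b hb) (hPhiConjge b)))
    · exact hPhiConjA b
  · ext b
    simp only [Set.mem_setOf_eq]
    constructor
    · intro h
      by_contra hb
      exact absurd h (ne_of_gt (hqlt b hb))
    · exact hPhiA b
end

section
/- Let (B, ⌊·,·⌋) be an SSD space and A a maximally q-positive subset of B. Then for every b ∈ B, Φ_A(b) ≥ q(b), with equality if and only if b ∈ A. -/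
theorem stmt_10 (B : Type*) [AddCommGroup B] [Module ℝ B] (hB : ∃ b : B, b ≠ 0)
    (br : B →ₗ[ℝ] B →ₗ[ℝ] ℝ) (hsym : ∀ b c, br b c = br c b)
    (q : B → ℝ) (hq : ∀ b, q b = br b b / 2)
    (A : Set B) (hA : A.Nonempty) (hApos : ∀ b ∈ A, ∀ c ∈ A, 0 ≤ q (b - c))
    (hAmax : ∀ A' : Set B, A'.Nonempty → (∀ b ∈ A', ∀ c ∈ A', 0 ≤ q (b - c)) →
      A ⊆ A' → A' = A)
    (Phi : B → EReal) (hPhi : ∀ b, Phi b = ⨆ a : A, ((br a.1 b - q a.1 : ℝ) : EReal)) :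
    ∀ b : B, (q b : EReal) ≤ Phi b ∧ (Phi b = (q b : EReal) ↔ b ∈ A) := by
  have key : ∀ a b : B, br a b - q a = q b - q (a - b) := by
    intro a b
    have h := hsym a b
    simp only [hq, map_sub, LinearMap.sub_apply]
    linarith
  have qneg : ∀ v : B, q (-v) = q v := by
    intro v
    simp [hq]
  intro b
  by_cases hb : b ∈ A
  · have hle : Phi b ≤ (q b : EReal) := by
      rw [hPhi]
      apply iSup_le
      rintro ⟨a, ha⟩
      rw [EReal.coe_le_coe_iff, key a b]
      have := hApos a ha b hb
      linarith
    have hge : (q b : EReal) ≤ Phi b := by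
      rw [hPhi]
      have : (q b : EReal) = ((br b b - q b : ℝ) : EReal) := by
        norm_cast
        rw [hq]; ring
      rw [this]
      exact le_iSup (fun a : A => ((br a.1 b - q a.1 : ℝ) : EReal)) ⟨b, hb⟩
    exact ⟨hge, ⟨fun _ => hb, fun _ => le_antisymm hle hge⟩⟩
  · -- find a ∈ A with q (a - b) < 0
    have hnot : ¬ (∀ x ∈ A ∪ {b}, ∀ y ∈ A ∪ {b}, 0 ≤ q (x - y)) := by
      intro hpos
      have := hAmax (A ∪ {b}) (hA.mono Set.subset_union_left) hpos Set.subset_union_left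
      apply hb
      rw [← this]
      exact Or.inr rfl
    push_neg at hnot
    obtain ⟨x, hx, y, hy, hxy⟩ := hnot
    have ⟨a, ha, haneg⟩ : ∃ a ∈ A, q (a - b) < 0 := by
      rcases hx with hx | hx <;> rcases hy with hy | hy
      · exact absurd (hApos x hx y hy) (not_le.mpr hxy)
      · exact ⟨x, hx, by simpa [Set.mem_singleton_iff.mp hy] using hxy⟩
      · refine ⟨y, hy, ?_⟩
        rw [Set.mem_singleton_iff.mp hx] at hxy
        rw [← qneg (y - b)]
        simpa using hxy
      · rw [Set.mem_singleton_iff.mp hx, Set.mem_singleton_iff.mp hy] at hxy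
        simp [hq] at hxy
    have hstrict : (q b : EReal) < Phi b := by
      rw [hPhi]
      have h1 : (q b : EReal) < ((br a b - q a : ℝ) : EReal) := by
        rw [EReal.coe_lt_coe_iff, key a b]
        linarith
      exact lt_of_lt_of_le h1
        (le_iSup (fun a : A => ((br a.1 b - q a.1 : ℝ) : EReal)) ⟨a, ha⟩)
    exact ⟨hstrict.le, ⟨fun h => absurd h hstrict.ne', fun h => absurd h hb⟩⟩
end

section
/- Let (B, ⌊·,·⌋) be an SSD space, (D, ι, ⟨·,·⟩) a linked external space, and A a nonempty q-positive subset of B. Define Θ_A(d) := sup_{a∈A}(⟨a,d⟩ − q(a)) and Ψ_A(b) := sup_{d∈D}(⟨b,d⟩ − Θ_A(d)). Then Ψ_A ≤ q on A, and Ψ_A* = Θ_A on D, where Ψ_A*(d) := sup_{b∈B}(⟨b,d⟩ − Ψ_A(b)). -/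
theorem stmt_11 (B : Type*) [AddCommGroup B] [Module ℝ B] (hB : ∃ b : B, b ≠ 0)
    (br : B →ₗ[ℝ] B →ₗ[ℝ] ℝ) (hsym : ∀ b c, br b c = br c b)
    (q : B → ℝ) (hq : ∀ b, q b = br b b / 2)
    (D : Type*) [AddCommGroup D] [Module ℝ D] (hD : ∃ d : D, d ≠ 0)
    (ι : B →ₗ[ℝ] D) (pair : B →ₗ[ℝ] D →ₗ[ℝ] ℝ)
    (hlink : ∀ b c : B, pair b (ι c) = br b c)
    (A : Set B) (hA : A.Nonempty) (hApos : ∀ b ∈ A, ∀ c ∈ A, 0 ≤ q (b - c))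
    (Theta : D → EReal)
    (hTheta : ∀ d, Theta d = ⨆ a : A, ((pair a.1 d - q a.1 : ℝ) : EReal))
    (Psi : B → EReal)
    (hPsi : ∀ b, Psi b = ⨆ d : D, ((pair b d : ℝ) : EReal) - Theta d) :
    (∀ a ∈ A, Psi a ≤ (q a : EReal)) ∧
      ∀ d : D, (⨆ b : B, ((pair b d : ℝ) : EReal) - Psi b) = Theta d := by
  have key : ∀ a ∈ A, Psi a ≤ (q a : EReal) := by
    intro a ha
    rw [hPsi]
    apply iSup_le
    intro d
    have h1 : ((pair a d - q a : ℝ) : EReal) ≤ Theta d := by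
      rw [hTheta]
      exact le_iSup (fun x : A => ((pair x.1 d - q x.1 : ℝ) : EReal)) ⟨a, ha⟩
    calc ((pair a d : ℝ) : EReal) - Theta d
        ≤ ((pair a d : ℝ) : EReal) - ((pair a d - q a : ℝ) : EReal) :=
          EReal.sub_le_sub le_rfl h1
      _ = ((q a : ℝ) : EReal) := by
          rw [← EReal.coe_sub]; norm_num
  refine ⟨key, fun d => le_antisymm ?_ ?_⟩
  · apply iSup_le
    intro b
    by_cases htop : Theta d = ⊤
    · rw [htop]; exact le_top
    have hbot : Theta d ≠ ⊥ := by
      rw [hTheta]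
      obtain ⟨a, ha⟩ := hA
      exact (lt_of_lt_of_le (EReal.bot_lt_coe _)
        (le_iSup (fun x : A => ((pair x.1 d - q x.1 : ℝ) : EReal)) ⟨a, ha⟩)).ne'
    set r := (Theta d).toReal with hr
    have hrd : Theta d = (r : EReal) := (EReal.coe_toReal htop hbot).symm
    have h2 : ((pair b d - r : ℝ) : EReal) ≤ Psi b := by
      rw [hPsi]
      refine le_trans ?_ (le_iSup (fun d' : D => ((pair b d' : ℝ) : EReal) - Theta d') d)
      rw [hrd, EReal.coe_sub]
    calc ((pair b d : ℝ) : EReal) - Psi b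
        ≤ ((pair b d : ℝ) : EReal) - ((pair b d - r : ℝ) : EReal) :=
          EReal.sub_le_sub le_rfl h2
      _ = (r : EReal) := by rw [← EReal.coe_sub]; norm_num
      _ = Theta d := hrd.symm
  · rw [hTheta]
    apply iSup_le
    rintro ⟨a, ha⟩
    have h3 : ((pair a d - q a : ℝ) : EReal) ≤ ((pair a d : ℝ) : EReal) - Psi a :=
      calc ((pair a d - q a : ℝ) : EReal)
          = ((pair a d : ℝ) : EReal) - (q a : EReal) := EReal.coe_sub _ _
        _ ≤ ((pair a d : ℝ) : EReal) - Psi a := EReal.sub_le_sub le_rfl (key a ha)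
    exact le_trans h3 (le_iSup (fun b : B => ((pair b d : ℝ) : EReal) - Psi b) a)
end

section
/- Let (B, ⌊·,·⌋) and (D, ⌈·,·⌉) be SSD spaces with q and q̃ the associated quadratic forms, and ι : B → D an SSD-homomorphism. Let A be a nonempty q-positive subset of B. Then ι(A) is a nonempty q̃-positive subset of D, and for all d ∈ D, Θ_A(d) = Φ_{ι(A)}(d) = q̃(d) − inf_{a∈A} q̃(ι(a) − d), where Θ_A(d) := sup_{a∈A}(⌈ι(a),d⌉ − q(a)). -/
lemma ereal_sup_sub {α : Type*} [Nonempty α] (c : ℝ) (x : α → ℝ) :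
    (⨆ a, ((c - x a : ℝ) : EReal)) = (c : EReal) - ⨅ a, ((x a : ℝ) : EReal) := by
  apply le_antisymm
  · apply iSup_le
    intro a
    rw [EReal.coe_sub]
    exact EReal.sub_le_sub le_rfl (iInf_le _ a)
  · by_contra h
    push_neg at h
    obtain ⟨r, hr1, hr2⟩ := EReal.exists_between_coe_real h
    have hinf : (⨅ a, ((x a : ℝ) : EReal)) < ((c - r : ℝ) : EReal) := by
      rw [EReal.coe_sub]
      rw [EReal.lt_sub_iff_add_lt (Or.inl (EReal.coe_ne_bot r)) (Or.inl (EReal.coe_ne_top r))]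
      calc (⨅ a, ((x a : ℝ) : EReal)) + (r : EReal)
          = (r : EReal) + ⨅ a, ((x a : ℝ) : EReal) := add_comm _ _
        _ < (c : EReal) := EReal.add_lt_of_lt_sub hr2
    rw [iInf_lt_iff] at hinf
    obtain ⟨a, ha⟩ := hinf
    have hxa : x a < c - r := by exact_mod_cast ha
    have : (r : EReal) < ((c - x a : ℝ) : EReal) := by
      exact_mod_cast by linarith
    exact absurd (lt_of_lt_of_le this (le_iSup (fun a => ((c - x a : ℝ) : EReal)) a)) (not_lt.mpr hr1.le)

theorem stmt_13 (B : Type*) [AddCommGroup B] [Module ℝ B] (hB : ∃ b : B, b ≠ 0)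
    (br : B →ₗ[ℝ] B →ₗ[ℝ] ℝ) (hsym : ∀ b c, br b c = br c b)
    (q : B → ℝ) (hq : ∀ b, q b = br b b / 2)
    (D : Type*) [AddCommGroup D] [Module ℝ D] (hD : ∃ d : D, d ≠ 0)
    (brD : D →ₗ[ℝ] D →ₗ[ℝ] ℝ) (hsymD : ∀ d e, brD d e = brD e d)
    (qt : D → ℝ) (hqt : ∀ d, qt d = brD d d / 2)
    (ι : B →ₗ[ℝ] D) (hhom : ∀ b c : B, brD (ι b) (ι c) = br b c)
    (A : Set B) (hA : A.Nonempty) (hApos : ∀ b ∈ A, ∀ c ∈ A, 0 ≤ q (b - c))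
    (Theta : D → EReal)
    (hTheta : ∀ d, Theta d = ⨆ a : A, ((brD (ι a.1) d - q a.1 : ℝ) : EReal)) :
    (ι '' A).Nonempty ∧ (∀ x ∈ ι '' A, ∀ y ∈ ι '' A, 0 ≤ qt (x - y)) ∧
      ∀ d : D,
        Theta d = (⨆ x : (ι '' A : Set D), ((brD x.1 d - qt x.1 : ℝ) : EReal)) ∧
        Theta d = (qt d : EReal) - ⨅ a : A, (qt (ι a.1 - d) : EReal) := by
  have hqtι : ∀ b : B, qt (ι b) = q b := by
    intro b; rw [hqt, hq, hhom]
  have hAne : Nonempty A := hA.to_subtype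
  refine ⟨hA.image ι, ?_, ?_⟩
  · rintro x ⟨a, haA, rfl⟩ y ⟨b, hbA, rfl⟩
    rw [← map_sub, hqtι]
    exact hApos a haA b hbA
  · intro d
    constructor
    · rw [hTheta d]
      have hsurj : Function.Surjective
          (fun a : A => (⟨ι a.1, ⟨a.1, a.2, rfl⟩⟩ : (ι '' A : Set D))) := by
        rintro ⟨x, a, haA, rfl⟩
        exact ⟨⟨a, haA⟩, rfl⟩
      rw [← hsurj.iSup_comp (fun x : (ι '' A : Set D) => ((brD x.1 d - qt x.1 : ℝ) : EReal))]
      exact iSup_congr fun a => by rw [hqtι]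
    · rw [hTheta d]
      have hkey : ∀ a : A, brD (ι a.1) d - q a.1 = qt d - qt (ι a.1 - d) := by
        intro a
        have h1 : qt (ι a.1 - d) = q a.1 - brD (ι a.1) d + qt d := by
          rw [hqt, hqt, hq, ← hhom]
          have hs : brD d (ι a.1) = brD (ι a.1) d := hsymD _ _
          simp only [map_sub, LinearMap.sub_apply, hs]
          ring
        rw [h1]; ring
      calc (⨆ a : A, ((brD (ι a.1) d - q a.1 : ℝ) : EReal))
          = ⨆ a : A, ((qt d - qt (ι a.1 - d) : ℝ) : EReal) :=
            iSup_congr fun a => by rw [hkey a]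
        _ = (qt d : EReal) - ⨅ a : A, (qt (ι a.1 - d) : EReal) :=
            ereal_sup_sub (qt d) (fun a : A => qt (ι a.1 - d))
end

section
/- Let (B, ⌊·,·⌋) and (D, ⌈·,·⌉) be SSD spaces, ι : B → D an SSD-homomorphism, and A a nonempty q-positive subset of B. Then ι(A) ⊆ A^G, where A^G := {d ∈ D : inf_{a∈A} q̃(ι(a) − d) ≥ 0} is the Gossez extension of A. Moreover, if for all d ∈ A^G one has inf_{a∈A} q̃(ι(a) − d) ≤ 0, then Θ_A ≥ q̃ on D. -/
theorem stmt_14 (B : Type*) [AddCommGroup B] [Module ℝ B] (hB : ∃ b : B, b ≠ 0)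
    (br : B →ₗ[ℝ] B →ₗ[ℝ] ℝ) (hsym : ∀ b c, br b c = br c b)
    (q : B → ℝ) (hq : ∀ b, q b = br b b / 2)
    (D : Type*) [AddCommGroup D] [Module ℝ D] (hD : ∃ d : D, d ≠ 0)
    (brD : D →ₗ[ℝ] D →ₗ[ℝ] ℝ) (hsymD : ∀ d e, brD d e = brD e d)
    (qt : D → ℝ) (hqt : ∀ d, qt d = brD d d / 2)
    (ι : B →ₗ[ℝ] D) (hhom : ∀ b c : B, brD (ι b) (ι c) = br b c)
    (A : Set B) (hA : A.Nonempty) (hApos : ∀ b ∈ A, ∀ c ∈ A, 0 ≤ q (b - c))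
    (AG : Set D) (hAG : AG = {d : D | ∀ a ∈ A, 0 ≤ qt (ι a - d)})
    (Theta : D → EReal)
    (hTheta : ∀ d, Theta d = ⨆ a : A, ((brD (ι a.1) d - q a.1 : ℝ) : EReal)) :
    (∀ a ∈ A, ι a ∈ AG) ∧
      ((∀ d ∈ AG, ∀ ε : ℝ, 0 < ε → ∃ a ∈ A, qt (ι a - d) < ε) →
        ∀ d : D, (qt d : EReal) ≤ Theta d) := by
  -- key identity: qt (ι a - d) = q a - brD (ι a) d + qt d
  have key : ∀ (a : B) (d : D), qt (ι a - d) = q a - brD (ι a) d + qt d := by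
    intro a d
    have h1 : brD (ι a - d) (ι a - d)
        = brD (ι a) (ι a) - brD (ι a) d - brD d (ι a) + brD d d := by
      simp [map_sub, LinearMap.sub_apply]; ring
    have h2 := hsymD d (ι a)
    have h3 := hhom a a
    rw [hqt, hqt, hq, h1]
    linarith
  constructor
  · intro a ha
    rw [hAG]
    intro a' ha'
    have : qt (ι a' - ι a) = q (a' - a) := by
      have : ι a' - ι a = ι (a' - a) := by rw [map_sub]
      rw [this, hqt, hq, hhom]
    rw [this]
    exact hApos a' ha' a ha
  · intro hinf d
    rw [hTheta]
    by_cases hd : d ∈ AG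
    · rw [le_iSup_iff]
      intro b hb
      by_contra hlt
      push_neg at hlt
      obtain ⟨x, hbx, hxd⟩ := EReal.lt_iff_exists_real_btwn.mp hlt
      have hxd' : x < qt d := by exact_mod_cast hxd
      obtain ⟨a, ha, hqa⟩ := hinf d hd (qt d - x) (by linarith)
      have := hb ⟨a, ha⟩
      have hle : (brD (ι a) d - q a : ℝ) ≤ x := by
        have hbx' : b < (x : EReal) := hbx
        by_contra hgt
        push_neg at hgt
        exact absurd (lt_of_lt_of_le hbx' (by exact_mod_cast hgt.le)) (not_lt.mpr this)
      have := key a d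
      linarith
    · simp only [hAG, Set.mem_setOf_eq, not_forall, not_le] at hd
      obtain ⟨a, ha, hneg⟩ := hd
      have hle : (qt d : EReal) ≤ ((brD (ι a) d - q a : ℝ) : EReal) := by
        have := key a d
        exact_mod_cast (by linarith : qt d ≤ brD (ι a) d - q a)
      exact hle.trans (le_iSup (fun a : A => ((brD (ι a.1) d - q a.1 : ℝ) : EReal)) ⟨a, ha⟩)
end

section
/- Let (B, ⌊·,·⌋, ‖·‖) be a Banach SSD space and f a proper convex lower semicontinuous VZ function on B, i.e., (f−q) ▽ p = 0 on B, where ▽ denotes inf-convolution and p := (1/2)‖·‖² + q. Then P_q(f) is a nonempty q-positive subset of B, and for every d ∈ dom f, dist(d, P_q(f)) ≤ 5√((f−q)(d)). -/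
/-!
Write `e := f - q ≥ 0` on `dom f`. The VZ condition gives, for every `c` and `ε > 0`, a point `b`
with `e b + p (c - b) < ε`. Convexity of `f` at the midpoint of `b` and `c`, together with
`f ≥ q` and the parallelogram law for `q`, yields `q (b - c) ≥ -2 (e b + e c)`; since also
`p ≥ 0`, this gives `‖c - b‖² ≤ 4 (ε + e c)`. Starting from `d` and taking `ε = e d / 4ⁿ⁺¹` at
step `n` produces a sequence whose steps are bounded by `√(5 e d) / 2ⁿ`, so it converges to a
point `z` with `‖d - z‖ ≤ 2 √(5 e d) ≤ 5 √(e d)`. Since `e → 0` along the sequence, lower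
semicontinuity of `f` and continuity of `q` give `f z = q z`.
-/

open Filter Topology

theorem LowerSemicontinuous.le_of_tendsto {X γ ι : Type*} [TopologicalSpace X] [LinearOrder γ]
    [DenselyOrdered γ] [TopologicalSpace γ] [OrderClosedTopology γ] {f : X → γ}
    (hf : LowerSemicontinuous f) {l : Filter ι} [l.NeBot] {u : ι → X} {z : X} {a : γ}
    (hu : Tendsto u l (𝓝 z)) (hfu : Tendsto (f ∘ u) l (𝓝 a)) : f z ≤ a := by
  by_contra! h
  obtain ⟨y, hay, hyz⟩ := exists_between h
  have : y ≤ a := ge_of_tendsto hfu (hu.eventually (hf z y hyz) |>.mono fun _ => le_of_lt)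
  exact (hay.trans_le this).false

theorem exists_dist_le_of_approx_descent {X : Type*} [PseudoMetricSpace X] [CompleteSpace X]
    {S : Set X} {e : X → ℝ} (he : ∀ x ∈ S, 0 ≤ e x)
    (hstep : ∀ c ∈ S, ∀ ε > 0, ∃ b ∈ S, e b ≤ ε ∧ dist c b ^ 2 ≤ 4 * (ε + e c))
    (hlim : ∀ (x : ℕ → X) (z : X), (∀ n, x n ∈ S) → Tendsto x atTop (𝓝 z) →
      Tendsto (e ∘ x) atTop (𝓝 0) → z ∈ S ∧ e z = 0)
    {d : X} (hd : d ∈ S) : ∃ z ∈ S, e z = 0 ∧ dist d z ≤ 2 * √(5 * e d) := by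
  rcases (he d hd).eq_or_lt with h0 | hpos
  · exact ⟨d, hd, h0.symm, by simp⟩
  set l := e d
  choose! next hnextS hnext_e hnext_dist using hstep
  let x : ℕ → X := fun n => Nat.rec d (fun n y => next y (l * (1 / 4) ^ (n + 1))) n
  have hx : ∀ n, x n ∈ S ∧ e (x n) ≤ l * (1 / 4) ^ n := by
    intro n
    induction n with
    | zero => exact ⟨hd, by simp [x, l]⟩
    | succ n ih => exact ⟨hnextS _ ih.1 _ (by positivity), hnext_e _ ih.1 _ (by positivity)⟩
  have hdist : ∀ n, dist (x n) (x (n + 1)) ≤ √(5 * l) * (1 / 2) ^ n := by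
    intro n
    have hsq : dist (x n) (x (n + 1)) ^ 2 ≤ 4 * (l * (1 / 4) ^ (n + 1) + e (x n)) :=
      hnext_dist _ (hx n).1 _ (by positivity)
    have hgeom :
        (√(5 * l) * (1 / 2) ^ n) ^ 2 = 4 * (l * (1 / 4) ^ (n + 1) + l * (1 / 4) ^ n) := by
      rw [mul_pow, Real.sq_sqrt (by positivity), ← pow_mul, pow_mul']
      norm_num [pow_succ]
      ring
    have hsq_le : dist (x n) (x (n + 1)) ^ 2 ≤ (√(5 * l) * (1 / 2) ^ n) ^ 2 := by
      linarith [(hx n).2]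
    exact (pow_le_pow_iff_left₀ dist_nonneg (by positivity) two_ne_zero).1 hsq_le
  obtain ⟨z, hz⟩ :=
    cauchySeq_tendsto_of_complete (cauchySeq_of_le_geometric _ _ (by norm_num) hdist)
  have he_lim : Tendsto (e ∘ x) atTop (𝓝 0) := by
    have hgeom := (tendsto_pow_atTop_nhds_zero_of_lt_one (r := (1 / 4 : ℝ)) (by norm_num)
      (by norm_num)).const_mul l
    rw [mul_zero] at hgeom
    exact squeeze_zero (fun n => he _ (hx n).1) (fun n => (hx n).2) hgeom
  obtain ⟨hzS, hz0⟩ := hlim x z (fun n => (hx n).1) hz he_lim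
  refine ⟨z, hzS, hz0, ?_⟩
  calc dist d z ≤ √(5 * l) / (1 - 1 / 2) :=
        dist_le_of_le_geometric_of_tendsto₀ _ _ (by norm_num) hdist hz
    _ = 2 * √(5 * l) := by ring

section Gap

variable {X : Type*} {q p : X → ℝ} {f : X → EReal}

/-- `(f - q) b` for `b ∈ dom f`; a junk value elsewhere, since `(⊤ : EReal).toReal = 0`. -/
def gap (f : X → EReal) (q : X → ℝ) (b : X) : ℝ := (f b).toReal - q b

theorem eq_coe_add_gap (q : X → ℝ) {b : X} (hbot : f b ≠ ⊥) (htop : f b ≠ ⊤) :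
    f b = ((q b + gap f q b : ℝ) : EReal) := by
  rw [gap, add_sub_cancel, EReal.coe_toReal htop hbot]

theorem coe_le_of_vz [AddGroup X] (hp0 : p 0 = 0) (hreal : ∀ b, f b ≠ ⊥)
    (hVZ : ∀ c : X, (⨅ b : X, (f b - (q b : EReal) + (p (c - b) : EReal))) = 0) (b : X) :
    (q b : EReal) ≤ f b := by
  rcases eq_or_ne (f b) ⊤ with htop | htop
  · simp [htop]
  have h0 : (0 : EReal) ≤ f b - q b + p (b - b) := hVZ b ▸ iInf_le _ b
  rw [sub_self, hp0, eq_coe_add_gap q (hreal b) htop] at h0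
  rw [eq_coe_add_gap q (hreal b) htop]
  norm_cast at h0 ⊢
  linarith

theorem gap_nonneg (hfq : ∀ b, (q b : EReal) ≤ f b) {b : X} (htop : f b ≠ ⊤) :
    0 ≤ gap f q b := by
  have := hfq b
  rw [← EReal.coe_toReal htop (ne_bot_of_le_ne_bot (EReal.coe_ne_bot _) this)] at this
  exact sub_nonneg.2 (EReal.coe_le_coe_iff.1 this)

theorem exists_lt_of_vz [Sub X] (hreal : ∀ b, f b ≠ ⊥)
    (hVZ : ∀ c : X, (⨅ b : X, (f b - (q b : EReal) + (p (c - b) : EReal))) = 0)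
    (c : X) {ε : ℝ} (hε : 0 < ε) : ∃ b, f b ≠ ⊤ ∧ gap f q b + p (c - b) < ε := by
  obtain ⟨b, hb⟩ := iInf_lt_iff.1 (hVZ c ▸ EReal.coe_pos.2 hε)
  have htop : f b ≠ ⊤ := by
    rintro h
    simp [h] at hb
  refine ⟨b, htop, ?_⟩
  rw [eq_coe_add_gap q (hreal b) htop] at hb
  norm_cast at hb
  linarith

theorem eq_of_tendsto_gap [TopologicalSpace X] (hq : Continuous q) (hf : LowerSemicontinuous f)
    (hreal : ∀ b, f b ≠ ⊥) (hfq : ∀ b, (q b : EReal) ≤ f b) {x : ℕ → X} {z : X}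
    (hx : ∀ n, f (x n) ≠ ⊤) (hxz : Tendsto x atTop (𝓝 z))
    (hgap : Tendsto (fun n => gap f q (x n)) atTop (𝓝 0)) : f z = q z := by
  have hfx : f ∘ x = fun n => ((q (x n) + gap f q (x n) : ℝ) : EReal) :=
    funext fun n => eq_coe_add_gap q (hreal _) (hx n)
  have hlim : Tendsto (f ∘ x) atTop (𝓝 (q z : EReal)) := by
    have := (continuous_coe_real_ereal.tendsto _).comp (((hq.tendsto z).comp hxz).add hgap)
    rw [hfx]
    rwa [add_zero] at this
  exact le_antisymm (hf.le_of_tendsto hxz hlim) (hfq z)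

end Gap

section SSD

variable {B : Type*} [NormedAddCommGroup B] [NormedSpace ℝ B]
  {br : B →ₗ[ℝ] B →ₗ[ℝ] ℝ} {q p : B → ℝ} {f : B → EReal}

theorem abs_le_half_norm_sq (hbd : ∀ b c : B, |br b c| ≤ ‖b‖ * ‖c‖)
    (hq : ∀ b, q b = br b b / 2) (b : B) : |q b| ≤ ‖b‖ ^ 2 / 2 := by
  rw [hq, abs_div, abs_two, sq]
  exact div_le_div_of_nonneg_right (hbd b b) zero_le_two

theorem continuous_of_bilin_bound (hbd : ∀ b c : B, |br b c| ≤ ‖b‖ * ‖c‖)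
    (hq : ∀ b, q b = br b b / 2) : Continuous q := by
  let F : B →L[ℝ] B →L[ℝ] ℝ := br.mkContinuous₂ 1 fun b c => by
    simpa [one_mul, Real.norm_eq_abs] using hbd b c
  rw [show q = fun b => F b b / 2 from funext hq]
  exact (F.isBoundedBilinearMap.continuous.comp (continuous_id.prodMk continuous_id)).div_const 2

theorem apply_midpoint (hq : ∀ b, q b = br b b / 2) (b c : B) :
    q ((1 / 2 : ℝ) • b + (1 - 1 / 2 : ℝ) • c) = (q b + q c) / 2 - q (b - c) / 4 := by
  simp only [hq, map_add, map_smul, map_sub, LinearMap.add_apply, LinearMap.smul_apply,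
    LinearMap.sub_apply, smul_eq_mul]
  ring

theorem neg_two_mul_le_of_convex (hq : ∀ b, q b = br b b / 2) (hfq : ∀ b, (q b : EReal) ≤ f b)
    (hconv : ∀ x y : B, ∀ t : ℝ, 0 ≤ t → t ≤ 1 →
      f (t • x + (1 - t) • y) ≤ (t : EReal) * f x + ((1 - t : ℝ) : EReal) * f y)
    {b c : B} {β γ : ℝ} (hb : f b = β) (hc : f c = γ) :
    -2 * ((β - q b) + (γ - q c)) ≤ q (b - c) := by
  have hmid := (hfq _).trans (hconv b c (1 / 2) (by norm_num) (by norm_num))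
  rw [hb, hc, apply_midpoint hq] at hmid
  norm_cast at hmid
  linarith

theorem exists_gap_le_of_vz (hbd : ∀ b c : B, |br b c| ≤ ‖b‖ * ‖c‖)
    (hq : ∀ b, q b = br b b / 2) (hp : ∀ b, p b = ‖b‖ ^ 2 / 2 + q b) (hreal : ∀ b, f b ≠ ⊥)
    (hconv : ∀ x y : B, ∀ t : ℝ, 0 ≤ t → t ≤ 1 →
      f (t • x + (1 - t) • y) ≤ (t : EReal) * f x + ((1 - t : ℝ) : EReal) * f y)
    (hVZ : ∀ c : B, (⨅ b : B, (f b - (q b : EReal) + (p (c - b) : EReal))) = 0)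
    {c : B} (hc : f c ≠ ⊤) {ε : ℝ} (hε : 0 < ε) :
    ∃ b, f b ≠ ⊤ ∧ gap f q b ≤ ε ∧ dist c b ^ 2 ≤ 4 * (ε + gap f q c) := by
  have hfq := coe_le_of_vz (by simp [hp, hq]) hreal hVZ
  obtain ⟨b, hb, hlt⟩ := exists_lt_of_vz hreal hVZ c hε
  have hsub := neg_two_mul_le_of_convex hq hfq hconv
    (eq_coe_add_gap q (hreal c) hc) (eq_coe_add_gap q (hreal b) hb)
  have hp_nonneg : 0 ≤ p (c - b) := by
    rw [hp]
    linarith [abs_le.1 (abs_le_half_norm_sq hbd hq (c - b))]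
  refine ⟨b, hb, by linarith, ?_⟩
  rw [dist_eq_norm]
  linarith [hp (c - b), gap_nonneg hfq hb, gap_nonneg hfq hc]

theorem exists_eq_dist_le_of_vz [CompleteSpace B] (hbd : ∀ b c : B, |br b c| ≤ ‖b‖ * ‖c‖)
    (hq : ∀ b, q b = br b b / 2) (hp : ∀ b, p b = ‖b‖ ^ 2 / 2 + q b) (hreal : ∀ b, f b ≠ ⊥)
    (hconv : ∀ x y : B, ∀ t : ℝ, 0 ≤ t → t ≤ 1 →
      f (t • x + (1 - t) • y) ≤ (t : EReal) * f x + ((1 - t : ℝ) : EReal) * f y)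
    (hlsc : LowerSemicontinuous f)
    (hVZ : ∀ c : B, (⨅ b : B, (f b - (q b : EReal) + (p (c - b) : EReal))) = 0)
    {d : B} {r : ℝ} (hd : f d = r) : ∃ z, f z = q z ∧ dist d z ≤ 5 * √(r - q d) := by
  have hfq := coe_le_of_vz (by simp [hp, hq]) hreal hVZ
  have hlim (x : ℕ → B) (z : B) (hx : ∀ n, f (x n) ≠ ⊤) (hxz : Tendsto x atTop (𝓝 z))
      (hgap : Tendsto (gap f q ∘ x) atTop (𝓝 0)) : f z ≠ ⊤ ∧ gap f q z = 0 := by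
    have hz :=
      eq_of_tendsto_gap (continuous_of_bilin_bound hbd hq) hlsc hreal hfq hx hxz hgap
    exact ⟨hz ▸ EReal.coe_ne_top _, by simp [gap, hz]⟩
  obtain ⟨z, hz, hz0, hdz⟩ := exists_dist_le_of_approx_descent (S := {b | f b ≠ ⊤})
    (fun _ hb => gap_nonneg hfq hb)
    (fun _ hc _ hε => exists_gap_le_of_vz hbd hq hp hreal hconv hVZ hc hε) hlim
    (hd ▸ EReal.coe_ne_top r)
  refine ⟨z, by simpa [hz0] using eq_coe_add_gap q (hreal z) hz, hdz.trans ?_⟩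
  have h5 : 2 * √5 ≤ 5 := by
    nlinarith [Real.sq_sqrt (show (0 : ℝ) ≤ 5 by norm_num), Real.sqrt_nonneg 5]
  have hgd : gap f q d = r - q d := by simp [gap, hd]
  rw [hgd, Real.sqrt_mul (by norm_num)]
  nlinarith [Real.sqrt_nonneg (r - q d)]

end SSD

theorem stmt_16_general (B : Type*) [NormedAddCommGroup B] [NormedSpace ℝ B] [CompleteSpace B]
    (br : B →ₗ[ℝ] B →ₗ[ℝ] ℝ)
    (hbd : ∀ b c : B, |br b c| ≤ ‖b‖ * ‖c‖)
    (q : B → ℝ) (hq : ∀ b, q b = br b b / 2)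
    (p : B → ℝ) (hp : ∀ b, p b = ‖b‖ ^ 2 / 2 + q b)
    (f : B → EReal) (hproper : ∃ b, f b ≠ ⊤) (hreal : ∀ b, f b ≠ ⊥)
    (hconv : ∀ x y : B, ∀ t : ℝ, 0 ≤ t → t ≤ 1 →
      f (t • x + (1 - t) • y) ≤ (t : EReal) * f x + ((1 - t : ℝ) : EReal) * f y)
    (hlsc : LowerSemicontinuous f)
    (hVZ : ∀ c : B, (⨅ b : B, (f b - (q b : EReal) + (p (c - b) : EReal))) = 0) :
    {b : B | f b = (q b : EReal)}.Nonempty ∧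
      (∀ b ∈ {b : B | f b = (q b : EReal)}, ∀ c ∈ {b : B | f b = (q b : EReal)},
        0 ≤ q (b - c)) ∧
      ∀ d : B, ∀ r : ℝ, f d = (r : EReal) →
        Metric.infDist d {b : B | f b = (q b : EReal)} ≤ 5 * Real.sqrt (r - q d) := by
  have hfq := coe_le_of_vz (by simp [hp, hq]) hreal hVZ
  obtain ⟨b₀, hb₀⟩ := hproper
  refine ⟨?_, fun b hb c hc => ?_, fun d r hd => ?_⟩
  · obtain ⟨z, hz, -⟩ := exists_eq_dist_le_of_vz hbd hq hp hreal hconv hlsc hVZ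
      (eq_coe_add_gap q (hreal b₀) hb₀)
    exact ⟨z, hz⟩
  · simpa using neg_two_mul_le_of_convex hq hfq hconv hb hc
  · obtain ⟨z, hz, hdz⟩ := exists_eq_dist_le_of_vz hbd hq hp hreal hconv hlsc hVZ hd
    exact (Metric.infDist_le_dist_of_mem (x := d) hz).trans hdz

theorem stmt_16 (B : Type*) [NormedAddCommGroup B] [NormedSpace ℝ B] [CompleteSpace B]
    (hB : ∃ b : B, b ≠ 0)
    (br : B →ₗ[ℝ] B →ₗ[ℝ] ℝ) (hsym : ∀ b c, br b c = br c b)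
    (hbd : ∀ b c : B, |br b c| ≤ ‖b‖ * ‖c‖)
    (q : B → ℝ) (hq : ∀ b, q b = br b b / 2)
    (p : B → ℝ) (hp : ∀ b, p b = ‖b‖ ^ 2 / 2 + q b)
    (f : B → EReal) (hproper : ∃ b, f b ≠ ⊤) (hreal : ∀ b, f b ≠ ⊥)
    (hconv : ∀ x y : B, ∀ t : ℝ, 0 ≤ t → t ≤ 1 →
      f (t • x + (1 - t) • y) ≤ (t : EReal) * f x + ((1 - t : ℝ) : EReal) * f y)
    (hlsc : LowerSemicontinuous f)
    (hVZ : ∀ c : B, (⨅ b : B, (f b - (q b : EReal) + (p (c - b) : EReal))) = 0) :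
    {b : B | f b = (q b : EReal)}.Nonempty ∧
      (∀ b ∈ {b : B | f b = (q b : EReal)}, ∀ c ∈ {b : B | f b = (q b : EReal)},
        0 ≤ q (b - c)) ∧
      ∀ d : B, ∀ r : ℝ, f d = (r : EReal) →
        Metric.infDist d {b : B | f b = (q b : EReal)} ≤ 5 * Real.sqrt (r - q d) :=
  stmt_16_general B br hbd q hq p hp f hproper hreal hconv hlsc hVZ
end

section
/- Let (B, ⌊·,·⌋, ‖·‖) be a Banach SSD space with Banach SSD dual (B*, ⌈·,·⌉, ‖·‖), and let f be a proper convex function on B that is an MAS function, i.e., f ≥ q on B and f* ≥ q̃ on B*. Then f is a VZ function: (f − q) ▽ p = 0 on B. -/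
set_option maxHeartbeats 1000000 in
theorem stmt_18 (B : Type*) [NormedAddCommGroup B] [NormedSpace ℝ B] [CompleteSpace B]
    (hB : ∃ b : B, b ≠ 0)
    (br : B →ₗ[ℝ] B →ₗ[ℝ] ℝ) (hsym : ∀ b c, br b c = br c b)
    (hbd : ∀ b c : B, |br b c| ≤ ‖b‖ * ‖c‖)
    (q : B → ℝ) (hq : ∀ b, q b = br b b / 2)
    (p : B → ℝ) (hp : ∀ b, p b = ‖b‖ ^ 2 / 2 + q b)
    (ι : B →ₗ[ℝ] (B →L[ℝ] ℝ)) (hι : ∀ b c : B, ι c b = br b c)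
    (brD : (B →L[ℝ] ℝ) →ₗ[ℝ] (B →L[ℝ] ℝ) →ₗ[ℝ] ℝ)
    (hsymD : ∀ x y : B →L[ℝ] ℝ, brD x y = brD y x)
    (hbdD : ∀ x y : B →L[ℝ] ℝ, |brD x y| ≤ ‖x‖ * ‖y‖)
    (hcompat : ∀ (b : B) (cstar : B →L[ℝ] ℝ), brD (ι b) cstar = cstar b)
    (qt : (B →L[ℝ] ℝ) → ℝ) (hqt : ∀ x, qt x = brD x x / 2)
    (f : B → EReal) (hproper : ∃ b, f b ≠ ⊤) (hreal : ∀ b, f b ≠ ⊥)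
    (hconv : ∀ x y : B, ∀ t : ℝ, 0 ≤ t → t ≤ 1 →
      f (t • x + (1 - t) • y) ≤ (t : EReal) * f x + ((1 - t : ℝ) : EReal) * f y)
    (hfq : ∀ b, (q b : EReal) ≤ f b)
    (hfstar : ∀ bstar : B →L[ℝ] ℝ,
      (qt bstar : EReal) ≤ ⨆ b : B, ((bstar b : ℝ) : EReal) - f b) :
    ∀ c : B, (⨅ b : B, (f b - (q b : EReal) + (p (c - b) : EReal))) = 0 := by
  intro c
  -- basic real estimates
  have hq_abs : ∀ b : B, |q b| ≤ ‖b‖ ^ 2 / 2 := by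
    intro b
    have := hbd b b
    rw [hq]
    rw [abs_div]
    simp only [abs_two]
    rw [div_le_div_iff₀ (by norm_num) (by norm_num)]
    nlinarith [this, sq_nonneg ‖b‖]
  have hp_nonneg : ∀ b : B, 0 ≤ p b := by
    intro b
    have := (abs_le.mp (hq_abs b)).1
    rw [hp]; linarith
  -- bilinear expansion
  have hbrexp : ∀ a b : B, br (a - b) (a - b) = br a a - 2 * br a b + br b b := by
    intro a b
    have h1 : br (a - b) (a - b) = br a a - br b a - (br a b - br b b) := by
      simp [map_sub, LinearMap.sub_apply]
    rw [h1, hsym b a]; ring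
  have hqsub : ∀ b : B, q (c - b) = q c - br b c + q b := by
    intro b
    rw [hq, hq, hq, hbrexp, hsym c b]; ring
  -- lower bound : every term is ≥ 0
  have hterm : ∀ b : B, (0 : EReal) ≤ f b - (q b : EReal) + (p (c - b) : EReal) := by
    intro b
    rcases eq_or_ne (f b) ⊤ with hb | hb
    · rw [hb, EReal.top_sub_coe, EReal.top_add_coe]; exact le_top
    · have hx : ((f b).toReal : EReal) = f b := EReal.coe_toReal hb (hreal b)
      have hqb : q b ≤ (f b).toReal := by
        have := hfq b
        rw [← hx] at this
        exact EReal.coe_le_coe_iff.mp this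
      rw [← hx, ← EReal.coe_sub, ← EReal.coe_add]
      have : (0:ℝ) ≤ (f b).toReal - q b + p (c - b) := by
        have := hp_nonneg (c - b); linarith
      exact_mod_cast this
  have hlow : (0 : EReal) ≤ ⨅ b : B, (f b - (q b : EReal) + (p (c - b) : EReal)) :=
    le_iInf hterm
  refine le_antisymm ?_ hlow
  by_contra hcon
  push_neg at hcon
  obtain ⟨ε, hε0, hεle⟩ : ∃ ε : ℝ, 0 < ε ∧ (ε : EReal) ≤ ⨅ b : B, (f b - (q b : EReal) + (p (c - b) : EReal)) := by
    obtain ⟨x, hx0, hxI⟩ := EReal.lt_iff_exists_real_btwn.mp hcon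
    exact ⟨x, by exact_mod_cast hx0, hxI.le⟩
  have hεterm : ∀ b : B, (ε : EReal) ≤ f b - (q b : EReal) + (p (c - b) : EReal) :=
    fun b => hεle.trans (iInf_le _ b)
  -- the concave minorant g
  set g : B → ℝ := fun b => (ι c) b - q c - ‖c - b‖ ^ 2 / 2 + ε with hgdef
  have hkey : ∀ b : B, (g b : EReal) ≤ f b := by
    intro b
    rcases eq_or_ne (f b) ⊤ with hb | hb
    · rw [hb]; exact le_top
    · have hx : ((f b).toReal : EReal) = f b := EReal.coe_toReal hb (hreal b)
      have h1 : ε ≤ (f b).toReal - q b + p (c - b) := by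
        have := hεterm b
        rw [← hx, ← EReal.coe_sub, ← EReal.coe_add] at this
        exact EReal.coe_le_coe_iff.mp this
      rw [← hx]
      have h2 : g b ≤ (f b).toReal := by
        simp only [hgdef]
        rw [hι b c]
        have h3 := hqsub b
        have h4 := hp (c - b)
        linarith
      exact_mod_cast h2
  -- separation of the epigraph of f and the strict hypograph of g
  set A : Set (B × ℝ) := {z | f z.1 ≤ (z.2 : EReal)} with hAdef
  set C : Set (B × ℝ) := {z | z.2 < g z.1} with hCdef
  have hg_cont : Continuous g := by
    rw [hgdef]
    have h1 : Continuous fun b : B => (ι c) b := (ι c).continuous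
    have h2 : Continuous fun b : B => ‖c - b‖ ^ 2 / 2 :=
      (((continuous_const.sub continuous_id).norm.pow 2).div_const 2)
    exact ((h1.sub continuous_const).sub h2).add continuous_const
  have hC_open : IsOpen C := isOpen_lt continuous_snd (hg_cont.comp continuous_fst)
  have hC_conv : Convex ℝ C := by
    intro z hz w hw a b ha hb hab
    have hb1 : b = 1 - a := by linarith
    subst hb1
    simp only [hCdef, Set.mem_setOf_eq] at hz hw ⊢
    have hfst : (a • z + (1 - a) • w).1 = a • z.1 + (1 - a) • w.1 := rfl
    have hsnd : (a • z + (1 - a) • w).2 = a * z.2 + (1 - a) * w.2 := rfl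
    rw [hfst, hsnd]
    -- concavity of g
    have hsum : c - (a • z.1 + (1 - a) • w.1) = a • (c - z.1) + (1 - a) • (c - w.1) := by
      module
    have hnorm : ‖c - (a • z.1 + (1 - a) • w.1)‖ ≤ a * ‖c - z.1‖ + (1 - a) * ‖c - w.1‖ := by
      rw [hsum]
      refine (norm_add_le _ _).trans ?_
      rw [norm_smul, norm_smul, Real.norm_eq_abs, Real.norm_eq_abs, abs_of_nonneg ha,
        abs_of_nonneg hb]
    have hnormsq : ‖c - (a • z.1 + (1 - a) • w.1)‖ ^ 2 ≤ a * ‖c - z.1‖ ^ 2 + (1 - a) * ‖c - w.1‖ ^ 2 := by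
      nlinarith [mul_self_le_mul_self (norm_nonneg (c - (a • z.1 + (1 - a) • w.1))) hnorm,
        sq_nonneg (‖c - z.1‖ - ‖c - w.1‖), mul_nonneg ha hb, norm_nonneg (c - z.1),
        norm_nonneg (c - w.1)]
    have hlin : (ι c) (a • z.1 + (1 - a) • w.1) = a * (ι c) z.1 + (1 - a) * (ι c) w.1 := by
      rw [map_add, map_smul, map_smul]; rfl
    have hcc : a * g z.1 + (1 - a) * g w.1 ≤ g (a • z.1 + (1 - a) • w.1) := by
      simp only [hgdef]
      rw [hlin]
      nlinarith [hnormsq]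
    have hstrict : a * z.2 + (1 - a) * w.2 < a * g z.1 + (1 - a) * g w.1 := by
      rcases eq_or_lt_of_le ha with ha' | ha'
      · rw [← ha']; simpa using hw
      · rcases eq_or_lt_of_le hb with hb' | hb'
        · have ha1 : a = 1 := by linarith
          rw [ha1]; simpa using hz
        · exact add_lt_add (mul_lt_mul_of_pos_left hz ha') (mul_lt_mul_of_pos_left hw hb')
    exact lt_of_lt_of_le hstrict hcc
  have hA_conv : Convex ℝ A := by
    intro z hz w hw a b ha hb hab
    have hb1 : b = 1 - a := by linarith
    subst hb1
    simp only [hAdef, Set.mem_setOf_eq] at hz hw ⊢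
    have hfst : (a • z + (1 - a) • w).1 = a • z.1 + (1 - a) • w.1 := rfl
    have hsnd : (a • z + (1 - a) • w).2 = a * z.2 + (1 - a) * w.2 := rfl
    rw [hfst, hsnd]
    have hzt : f z.1 ≠ ⊤ := fun h => by simp [h] at hz
    have hwt : f w.1 ≠ ⊤ := fun h => by simp [h] at hw
    have hxz : ((f z.1).toReal : EReal) = f z.1 := EReal.coe_toReal hzt (hreal z.1)
    have hxw : ((f w.1).toReal : EReal) = f w.1 := EReal.coe_toReal hwt (hreal w.1)
    have hz' : (f z.1).toReal ≤ z.2 := by rw [← hxz] at hz; exact_mod_cast hz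
    have hw' : (f w.1).toReal ≤ w.2 := by rw [← hxw] at hw; exact_mod_cast hw
    have := hconv z.1 w.1 a ha (by linarith)
    refine this.trans ?_
    rw [← hxz, ← hxw, ← EReal.coe_mul, ← EReal.coe_mul, ← EReal.coe_add]
    have : a * (f z.1).toReal + (1 - a) * (f w.1).toReal ≤ a * z.2 + (1 - a) * w.2 := by
      nlinarith [mul_le_mul_of_nonneg_left hz' ha, mul_le_mul_of_nonneg_left hw' hb]
    exact_mod_cast this
  have hdisj : Disjoint C A := by
    rw [Set.disjoint_left]
    intro z hzC hzA
    simp only [hCdef, Set.mem_setOf_eq] at hzC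
    simp only [hAdef, Set.mem_setOf_eq] at hzA
    have : (g z.1 : EReal) ≤ (z.2 : EReal) := (hkey z.1).trans hzA
    have : g z.1 ≤ z.2 := EReal.coe_le_coe_iff.mp this
    linarith
  obtain ⟨φ, u, hCu, hAu⟩ := geometric_hahn_banach_open hC_conv hC_open hA_conv hdisj
  set β : ℝ := φ (0, 1) with hβdef
  set L : B → ℝ := fun b => φ (b, 0) with hLdef
  have hφ : ∀ (b : B) (t : ℝ), φ (b, t) = L b + t * β := by
    intro b t
    have h1 : (b, t) = (b, (0:ℝ)) + t • ((0:B), (1:ℝ)) := by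
      simp [Prod.ext_iff]
    rw [h1, map_add, map_smul, smul_eq_mul, hLdef, hβdef]
  have hCb : ∀ (b : B) (t : ℝ), t < g b → L b + t * β < u := by
    intro b t ht
    have := hCu (b, t) ht
    rwa [hφ] at this
  have hAb : ∀ (b : B) (x : ℝ), f b ≤ (x : EReal) → u ≤ L b + x * β := by
    intro b x hx
    have := hAu (b, x) hx
    rwa [hφ] at this
  have hL0 : L 0 = 0 := by
    have : ((0:B), (0:ℝ)) = (0 : B × ℝ) := rfl
    rw [hLdef]; simp only; rw [this, map_zero]
  have hβ0 : 0 ≤ β := by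
    by_contra hβ
    push_neg at hβ
    set t : ℝ := min (g 0 - 1) (u / β - 1) with htdef
    have ht : t < g 0 := lt_of_le_of_lt (min_le_left _ _) (by linarith)
    have h1 := hCb 0 t ht
    rw [hL0] at h1
    have h2 : t ≤ u / β - 1 := min_le_right _ _
    have h3 : (u / β - 1) * β ≤ t * β := mul_le_mul_of_nonpos_right h2 hβ.le
    have h4 : (u / β - 1) * β = u - β := by
      rw [sub_mul, div_mul_cancel₀ _ (ne_of_lt hβ), one_mul]
    linarith
  have hβpos : 0 < β := by
    rcases eq_or_lt_of_le hβ0 with h | h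
    · exfalso
      obtain ⟨b₀, hb₀⟩ := hproper
      have hx : ((f b₀).toReal : EReal) = f b₀ := EReal.coe_toReal hb₀ (hreal b₀)
      have h1 := hAb b₀ (f b₀).toReal (le_of_eq hx.symm)
      have h2 := hCb b₀ (g b₀ - 1) (by linarith)
      rw [← h] at h1 h2
      simp only [mul_zero, add_zero] at h1 h2
      linarith
    · exact h
  -- the dual elements
  set X : B →L[ℝ] ℝ := (-(1 / β)) • (φ.comp (ContinuousLinearMap.inl ℝ B ℝ)) - ι c with hXdef
  have hXapp : ∀ v : B, X v = -(L v) / β - br v c := by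
    intro v
    rw [hXdef]
    simp only [ContinuousLinearMap.sub_apply, ContinuousLinearMap.smul_apply,
      ContinuousLinearMap.comp_apply, ContinuousLinearMap.inl_apply, smul_eq_mul, hι v c]
    rw [hLdef]
    ring
  set Y : B →L[ℝ] ℝ := X + ι c with hYdef
  have hYapp : ∀ v : B, Y v = X v + br v c := by
    intro v
    rw [hYdef]
    simp only [ContinuousLinearMap.add_apply, hι v c]
  have hYL : ∀ v : B, Y v = -(L v) / β := by
    intro v; rw [hYapp, hXapp]; ring
  set r : ℝ := u / β with hrdef
  -- epigraph side : f ≥ Y + r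
  have hA' : ∀ b : B, ((Y b + r : ℝ) : EReal) ≤ f b := by
    intro b
    rcases eq_or_ne (f b) ⊤ with hb | hb
    · rw [hb]; exact le_top
    · have hx : ((f b).toReal : EReal) = f b := EReal.coe_toReal hb (hreal b)
      have h1 := hAb b (f b).toReal (le_of_eq hx.symm)
      have h2 : Y b + r ≤ (f b).toReal := by
        rw [hYL, hrdef]
        have he : -(L b) / β + u / β = (u - L b) / β := by ring
        rw [he, div_le_iff₀ hβpos]
        linarith
      rw [← hx]
      exact_mod_cast h2
  -- hypograph side : g ≤ Y + r
  have hC' : ∀ b : B, g b ≤ Y b + r := by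
    intro b
    by_contra hcontra
    push_neg at hcontra
    have h1 := hCb b (Y b + r) hcontra
    have h2 : (Y b + r) * β = u - L b := by
      rw [hYL, hrdef]
      have he : -(L b) / β + u / β = (u - L b) / β := by ring
      rw [he, div_mul_cancel₀ _ (ne_of_gt hβpos)]
    rw [h2] at h1
    linarith
  -- bound on qt Y
  have hqtY : qt Y ≤ -r := by
    have h1 : (⨆ b : B, ((Y b : ℝ) : EReal) - f b) ≤ ((-r : ℝ) : EReal) := by
      refine iSup_le fun b => ?_
      rcases eq_or_ne (f b) ⊤ with hb | hb
      · rw [hb]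
        rw [sub_eq_add_neg]
        simp
      · have hx : ((f b).toReal : EReal) = f b := EReal.coe_toReal hb (hreal b)
        have h2 : Y b + r ≤ (f b).toReal := by
          have := hA' b
          rw [← hx] at this
          exact_mod_cast this
        rw [← hx, ← EReal.coe_sub]
        exact_mod_cast (by linarith : Y b - (f b).toReal ≤ -r)
    have := (hfstar Y).trans h1
    exact_mod_cast this
  -- key inequality from hC'
  set M : ℝ := r + X c + q c - ε with hMdef
  have hM : ∀ v : B, X v - ‖v‖ ^ 2 / 2 ≤ M := by
    intro v
    have h1 := hC' (c - v)
    simp only [hgdef] at h1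
    rw [hι (c - v) c, hYapp] at h1
    have h2 : c - (c - v) = v := by abel
    rw [h2] at h1
    have h3 : X (c - v) = X c - X v := by rw [map_sub]
    have h4 : br (c - v) c = br c c - br v c := by
      have : br (c - v) = br c - br v := map_sub br c v
      rw [this, LinearMap.sub_apply]
    have h5 : br c c = 2 * q c := by rw [hq c]; ring
    rw [h3, h4, h5] at h1
    rw [hMdef]
    linarith
  -- computation of qt Y
  have hbrDY : brD Y Y = 2 * qt X + 2 * X c + 2 * q c := by
    rw [hYdef]
    have h1 : brD (X + ι c) = brD X + brD (ι c) := map_add brD X (ι c)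
    rw [h1, LinearMap.add_apply, map_add, map_add]
    have h2 : brD (ι c) X = X c := hcompat c X
    have h3 : brD X (ι c) = X c := by rw [hsymD]; exact h2
    have h4 : brD (ι c) (ι c) = (ι c) c := hcompat c (ι c)
    have h5 : (ι c) c = 2 * q c := by rw [hι c c, hq c]; ring
    rw [h2, h3, h4, h5, hqt X]
    ring
  have hqtX : -(‖X‖ ^ 2 / 2) ≤ qt X := by
    have h1 := (abs_le.mp (hbdD X X)).1
    rw [hqt X]
    nlinarith [sq_nonneg ‖X‖, norm_nonneg X]
  have hM4 : M ≤ ‖X‖ ^ 2 / 2 - ε := by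
    have h1 : qt Y = qt X + X c + q c := by rw [hqt Y, hbrDY]; ring
    have h2 : r ≤ -qt Y := by linarith [hqtY]
    rw [hMdef]
    linarith [hqtX, h1, h2]
  have hfin : ∀ v : B, X v - ‖v‖ ^ 2 / 2 ≤ ‖X‖ ^ 2 / 2 - ε := fun v => (hM v).trans hM4
  -- final contradiction
  set δ : ℝ := ε / (2 * (‖X‖ + 1)) with hδdef
  have h2p : (0:ℝ) < 2 * (‖X‖ + 1) := by positivity
  have hδpos : 0 < δ := by rw [hδdef]; positivity
  have hδlt : ‖X‖ * δ < ε := by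
    calc ‖X‖ * δ < (2 * (‖X‖ + 1)) * δ := by
          refine mul_lt_mul_of_pos_right ?_ hδpos
          linarith [norm_nonneg X]
      _ = ε := by rw [hδdef]; field_simp
  rcases lt_or_ge ‖X‖ δ with hcase | hcase
  · -- ‖X‖ < δ : evaluate at v = 0
    have h1 := hfin 0
    simp only [map_zero, norm_zero] at h1
    have h2 : ‖X‖ * ‖X‖ ≤ ‖X‖ * δ := mul_le_mul_of_nonneg_left hcase.le (norm_nonneg X)
    nlinarith [norm_nonneg X]
  · -- ‖X‖ ≥ δ > 0
    have hXpos : 0 < ‖X‖ := lt_of_lt_of_le hδpos hcase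
    have hlt : ‖X‖ - δ < ‖X‖ := by linarith
    obtain ⟨x₀, hx₀1, hx₀2⟩ := X.exists_lt_apply_of_lt_opNorm hlt
    rw [Real.norm_eq_abs] at hx₀2
    obtain ⟨w, hw1, hw2⟩ : ∃ w : B, ‖w‖ < 1 ∧ ‖X‖ - δ < X w := by
      rcases le_total 0 (X x₀) with hsgn | hsgn
      · exact ⟨x₀, hx₀1, by rwa [abs_of_nonneg hsgn] at hx₀2⟩
      · refine ⟨-x₀, by simpa using hx₀1, ?_⟩
        rw [map_neg]
        rwa [abs_of_nonpos hsgn] at hx₀2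
    set v : B := ‖X‖ • w with hvdef
    have hv1 : ‖v‖ ≤ ‖X‖ := by
      rw [hvdef, norm_smul, Real.norm_eq_abs, abs_of_nonneg (norm_nonneg X)]
      nlinarith [norm_nonneg X]
    have hv2 : ‖X‖ * (‖X‖ - δ) < X v := by
      rw [hvdef, map_smul, smul_eq_mul]
      exact mul_lt_mul_of_pos_left hw2 hXpos
    have h1 := hfin v
    have hvsq : ‖v‖ ^ 2 ≤ ‖X‖ ^ 2 := by
      nlinarith [norm_nonneg v]
    have hexp : ‖X‖ * (‖X‖ - δ) = ‖X‖ ^ 2 - ‖X‖ * δ := by ring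
    linarith [h1, hvsq, hδlt, hv2, hexp]
end

section
/- Let X be a real vector space, Y a real vector space, and ⟨·,·⟩ : X × Y → ℝ a bilinear pairing (not necessarily separating points). Let f : X → ℝ ∪ {∞} be a proper convex function that is lower semicontinuous for the weak topology w(X,Y). Then for every y ∈ X, f(y) = sup_{L} (L(y) − f*(L)), where the supremum runs over all w(X,Y)-continuous linear functionals L on X and f*(L) := sup_X (L − f). -/
open Filter Topology Set

private lemma ereal_sub_sub_cancel (a : ℝ) (c : EReal) (hc : c ≠ ⊥) :
    (a : EReal) - ((a : EReal) - c) = c := by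
  induction c with
  | bot => simp at hc
  | coe r => norm_cast; ring
  | top => simp

theorem stmt_19 (X : Type*) [AddCommGroup X] [Module ℝ X]
    (Y : Type*) [AddCommGroup Y] [Module ℝ Y]
    (pair : X →ₗ[ℝ] Y →ₗ[ℝ] ℝ)
    (f : WeakBilin pair → EReal) (hproper : ∃ x, f x ≠ ⊤) (hreal : ∀ x, f x ≠ ⊥)
    (hconv : ∀ x y : WeakBilin pair, ∀ t : ℝ, 0 ≤ t → t ≤ 1 →
      f (t • x + (1 - t) • y) ≤ (t : EReal) * f x + ((1 - t : ℝ) : EReal) * f y)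
    (hlsc : LowerSemicontinuous f) :
    ∀ y : WeakBilin pair,
      f y = ⨆ L : WeakBilin pair →L[ℝ] ℝ,
        (((L y : ℝ) : EReal) - ⨆ x : WeakBilin pair, ((L x : ℝ) : EReal) - f x) := by
  classical
  set g : (WeakBilin pair →L[ℝ] ℝ) → EReal :=
    fun L => ⨆ x : WeakBilin pair, ((L x : ℝ) : EReal) - f x with hg
  obtain ⟨x₀, hx₀⟩ := hproper
  obtain ⟨r₀, hr₀⟩ : ∃ r : ℝ, f x₀ = (r : EReal) :=
    ⟨(f x₀).toReal, (EReal.coe_toReal hx₀ (hreal x₀)).symm⟩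
  -- the epigraph
  set S : Set (WeakBilin pair × ℝ) := {p | f p.1 ≤ (p.2 : EReal)} with hS
  have hSconv : Convex ℝ S := by
    rintro ⟨x, a⟩ hxa ⟨z, b⟩ hzb t s ht hs hts
    have hb : s = 1 - t := by linarith
    subst hb
    simp only [hS, Set.mem_setOf_eq] at hxa hzb ⊢
    calc f (t • x + (1 - t) • z) ≤ (t : EReal) * f x + ((1 - t : ℝ) : EReal) * f z :=
          hconv x z t ht (by linarith)
      _ ≤ (t : EReal) * (a : EReal) + ((1 - t : ℝ) : EReal) * (b : EReal) := by
          exact add_le_add (mul_le_mul_of_nonneg_left hxa (EReal.coe_nonneg.2 ht))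
            (mul_le_mul_of_nonneg_left hzb (EReal.coe_nonneg.2 hs))
      _ = ((t * a + (1 - t) * b : ℝ) : EReal) := by
          rw [← EReal.coe_mul, ← EReal.coe_mul, ← EReal.coe_add]
  have hSclosed : IsClosed S := by
    rw [← isOpen_compl_iff, isOpen_iff_mem_nhds]
    rintro ⟨x, s⟩ h
    simp only [hS, Set.mem_compl_iff, Set.mem_setOf_eq, not_le] at h
    obtain ⟨r, hsr, hrf⟩ := EReal.exists_between_coe_real h
    have hsr' : s < r := by exact_mod_cast hsr
    rw [nhds_prod_eq]
    refine Filter.mem_of_superset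
      (Filter.prod_mem_prod (hlsc x _ hrf) (Iio_mem_nhds hsr')) ?_
    rintro ⟨x', s'⟩ ⟨h1, h2⟩
    simp only [hS, Set.mem_compl_iff, Set.mem_setOf_eq, not_le]
    exact lt_trans (by exact_mod_cast h2) h1
  -- separation of a point outside the epigraph
  have sep : ∀ (z : WeakBilin pair) (r : ℝ), (z, r) ∉ S →
      ∃ (L : WeakBilin pair →L[ℝ] ℝ) (c u : ℝ), 0 ≤ c ∧ L z + c * r < u ∧
        ∀ x : WeakBilin pair, ∀ t : ℝ, f x ≤ (t : EReal) → u < L x + c * t := by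
    intro z r hzr
    obtain ⟨G, u, hGz, hGS⟩ := geometric_hahn_banach_point_closed hSconv hSclosed hzr
    set L : WeakBilin pair →L[ℝ] ℝ := G.comp (ContinuousLinearMap.inl ℝ _ ℝ) with hL
    set c : ℝ := G (0, 1) with hc
    have hsplit : ∀ (x : WeakBilin pair) (t : ℝ), G (x, t) = L x + c * t := by
      intro x t
      have : ((x, t) : WeakBilin pair × ℝ) = (x, (0 : ℝ)) + t • ((0 : WeakBilin pair), (1 : ℝ)) := by
        simp
      rw [this, map_add, map_smul]
      simp [hL, hc, smul_eq_mul, mul_comm]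
    have hmem : ∀ x : WeakBilin pair, ∀ t : ℝ, f x ≤ (t : EReal) → u < L x + c * t := by
      intro x t hxt
      have := hGS (x, t) hxt
      rwa [hsplit] at this
    have hcnn : 0 ≤ c := by
      by_contra hcneg
      push_neg at hcneg
      set t : ℝ := max r₀ ((u - L x₀) / c + 1) with htdef
      have h1 : f x₀ ≤ (t : EReal) := by
        rw [hr₀]; exact_mod_cast le_max_left _ _
      have h2 := hmem x₀ t h1
      have h3 : (u - L x₀) / c < t := lt_of_lt_of_le (by linarith) (le_max_right _ _)
      have h4 : c * t < u - L x₀ := by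
        rw [div_lt_iff_of_neg hcneg] at h3
        linarith [h3]
      linarith
    exact ⟨L, c, u, hcnn, by rw [← hsplit]; exact hGz, hmem⟩
  -- conjugate bound from a strict separating functional with positive vertical part
  have bound : ∀ (L : WeakBilin pair →L[ℝ] ℝ) (c u : ℝ), 0 < c →
      (∀ x : WeakBilin pair, ∀ t : ℝ, f x ≤ (t : EReal) → u < L x + c * t) →
      g ((-c⁻¹) • L) ≤ ((-u / c : ℝ) : EReal) := by
    intro L c u hcpos hmem
    refine iSup_le fun x => ?_
    by_cases hfx : f x = ⊤
    · rw [hfx]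
      exact le_trans (le_of_eq (EReal.sub_top _)) bot_le
    · obtain ⟨s, hs⟩ : ∃ s : ℝ, f x = (s : EReal) :=
        ⟨(f x).toReal, (EReal.coe_toReal hfx (hreal x)).symm⟩
      have h1 := hmem x s (le_of_eq hs)
      have h2 : ((-c⁻¹) • L) x = -c⁻¹ * L x := rfl
      rw [hs, h2, ← EReal.coe_sub, EReal.coe_le_coe_iff]
      rw [← sub_nonneg]
      have hXc : -u / c - (-c⁻¹ * L x - s) = (L x + c * s - u) / c := by
        field_simp; ring
      rw [hXc]
      exact div_nonneg (by linarith) hcpos.le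
  -- Step A : there is a functional with finite conjugate
  have stepA : ∃ (Λ₀ : WeakBilin pair →L[ℝ] ℝ) (M₀ : ℝ), g Λ₀ ≤ (M₀ : EReal) := by
    have hnot : (x₀, r₀ - 1) ∉ S := by
      simp only [hS, Set.mem_setOf_eq, hr₀, not_le]
      exact_mod_cast sub_one_lt r₀
    obtain ⟨L, c, u, hcnn, hlt, hmem⟩ := sep x₀ (r₀ - 1) hnot
    have hmem₀ : u < L x₀ + c * r₀ := hmem x₀ r₀ (le_of_eq hr₀)
    have hcpos : 0 < c := by nlinarith
    exact ⟨(-c⁻¹) • L, -u / c, bound L c u hcpos hmem⟩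
  obtain ⟨Λ₀, M₀, hΛ₀⟩ := stepA
  -- key separation estimate
  intro y
  have key : ∀ r : ℝ, (r : EReal) < f y →
      ∃ L : WeakBilin pair →L[ℝ] ℝ, (r : EReal) < ((L y : ℝ) : EReal) - g L := by
    intro r hr
    have hnot : (y, r) ∉ S := by
      simp only [hS, Set.mem_setOf_eq, not_le]; exact hr
    obtain ⟨L, c, u, hcnn, hlt, hmem⟩ := sep y r hnot
    rcases eq_or_lt_of_le hcnn with hc0 | hcpos
    · -- c = 0 : tilt by Λ₀
      subst hc0
      simp only [zero_mul, add_zero] at hlt hmem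
      set d : ℝ := u - L y with hd
      have hdpos : 0 < d := by simp only [hd]; linarith
      set n : ℝ := max 0 ((r - Λ₀ y + M₀) / d + 1) with hn
      have hn0 : 0 ≤ n := le_max_left _ _
      have hnbig : r < Λ₀ y - M₀ + n * d := by
        have h1 : (r - Λ₀ y + M₀) / d < n := lt_of_lt_of_le (by linarith) (le_max_right _ _)
        rw [div_lt_iff₀ hdpos] at h1
        linarith
      refine ⟨Λ₀ - n • L, ?_⟩
      have hgle : g (Λ₀ - n • L) ≤ ((M₀ - n * u : ℝ) : EReal) := by
        refine iSup_le fun x => ?_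
        by_cases hfx : f x = ⊤
        · rw [hfx]; exact le_trans (le_of_eq (EReal.sub_top _)) bot_le
        · obtain ⟨s, hs⟩ : ∃ s : ℝ, f x = (s : EReal) :=
            ⟨(f x).toReal, (EReal.coe_toReal hfx (hreal x)).symm⟩
          have h1 : u < L x := hmem x s (le_of_eq hs)
          have h2 : Λ₀ x - s ≤ M₀ := by
            have := le_trans (le_iSup (fun x => ((Λ₀ x : ℝ) : EReal) - f x) x) hΛ₀
            rw [hs, ← EReal.coe_sub, EReal.coe_le_coe_iff] at this
            exact this
          have h3 : ((Λ₀ - n • L) x : ℝ) = Λ₀ x - n * L x := rfl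
          rw [hs, h3, ← EReal.coe_sub, EReal.coe_le_coe_iff]
          nlinarith [mul_le_mul_of_nonneg_left h1.le hn0]
      have h4 : ((Λ₀ - n • L) y : ℝ) = Λ₀ y - n * L y := rfl
      calc (r : EReal) < ((Λ₀ y - n * L y - (M₀ - n * u) : ℝ) : EReal) := by
            rw [EReal.coe_lt_coe_iff]
            have : Λ₀ y - n * L y - (M₀ - n * u) = Λ₀ y - M₀ + n * d := by
              simp only [hd]; ring
            rw [this]; exact hnbig
        _ = ((Λ₀ y - n * L y : ℝ) : EReal) - ((M₀ - n * u : ℝ) : EReal) := by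
            rw [← EReal.coe_sub]
        _ ≤ ((Λ₀ - n • L) y : ℝ) - g (Λ₀ - n • L) := by
            rw [h4]; exact EReal.sub_le_sub le_rfl hgle
    · -- c > 0
      refine ⟨(-c⁻¹) • L, ?_⟩
      have hgle := bound L c u hcpos hmem
      have h2 : (((-c⁻¹) • L) y : ℝ) = -c⁻¹ * L y := rfl
      have hry : r < -c⁻¹ * L y - (-u / c) := by
        have h3 : -c⁻¹ * L y - (-u / c) = (u - L y) / c := by field_simp; ring
        rw [h3, lt_div_iff₀ hcpos]
        linarith
      calc (r : EReal) < ((-c⁻¹ * L y - (-u / c) : ℝ) : EReal) := by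
            rw [EReal.coe_lt_coe_iff]; exact hry
        _ = ((-c⁻¹ * L y : ℝ) : EReal) - ((-u / c : ℝ) : EReal) := by rw [← EReal.coe_sub]
        _ ≤ (((-c⁻¹) • L) y : ℝ) - g ((-c⁻¹) • L) := by
            rw [h2]; exact EReal.sub_le_sub le_rfl hgle
  refine le_antisymm ?_ ?_
  · -- hard direction
    by_contra h
    push_neg at h
    obtain ⟨r, h1, h2⟩ := EReal.exists_between_coe_real h
    obtain ⟨L, hL⟩ := key r h2
    exact absurd (le_trans (le_iSup (fun L => ((L y : ℝ) : EReal) - g L) L) h1.le) (not_le.2 hL)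
  · -- easy direction
    refine iSup_le fun L => ?_
    have h1 : ((L y : ℝ) : EReal) - f y ≤ g L :=
      le_iSup (fun x => ((L x : ℝ) : EReal) - f x) y
    calc ((L y : ℝ) : EReal) - g L
        ≤ ((L y : ℝ) : EReal) - (((L y : ℝ) : EReal) - f y) := EReal.sub_le_sub le_rfl h1
      _ = f y := ereal_sub_sub_cancel _ _ (hreal y)
end
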